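/- arXiv:2605.00995 — 6 statements merged into one kernel-verified Lean document; each statement's English description precedes it below -/
import Mathlib

section
/- There exist absolute constants c > 0 and C > 0 such that the following holds. For all positive integers m and n and all functions L₁,…,Lₙ : 𝔽₂^m → 𝔽₂ each of degree at most 1 (i.e., affine functions), the output distribution of the tuple (L₁,…,Lₙ) satisfies ‖(L₁,…,Lₙ) − Ber(1/3)^⊗n‖_TV ≥ 1 − C·2^{−c·n}. -/
/-
Each `Lᵢ` is affine, so `x ↦ (Lᵢ x)ᵢ` is an affine map `𝔽₂^m → 𝔽₂ⁿ` and its output distribution `μ`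
is uniform on its image `A`, an affine subspace. The total variation distance is at least
`1 - ∑ √(μ ν)` (Bhattacharyya), and for the product measure `ν = Ber(1/3)^⊗n` one has
`∑_{y ∈ A} √ν(y) ≤ gⁿ √|A|` with `g = (√(2/3) + √(1/3)) / √2 < 1`: splitting `A` along a coordinate
gives two affine slices, of equal size unless one is empty. Hence the distance is at least
`1 - gⁿ ≥ 1 - 2^(-n/100)`.
-/

open Finset

/-- Distribution of `f(X)` on `β` for `X` uniform on the finite type `α`. -/
noncomputable def distOf {α β : Type*} [Fintype α] [DecidableEq β] (f : α → β) (y : β) : ℝ :=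
  ((Finset.univ.filter fun x => f x = y).card : ℝ) / (Fintype.card α : ℝ)

/-- Output distribution on `𝔽₂ⁿ` of the tuple `(P₁(X),…,Pₙ(X))` for uniform `X ∈ 𝔽₂^m`. -/
noncomputable def outDist {m n : ℕ} (P : Fin n → (Fin m → ZMod 2) → ZMod 2) :
    (Fin n → ZMod 2) → ℝ :=
  distOf (fun x i => P i x)

/-- Total variation distance between two distributions on a finite type. -/
noncomputable def tvDist {β : Type*} [Fintype β] (μ ν : β → ℝ) : ℝ :=
  (1 / 2) * ∑ y, |μ y - ν y|

/-- The distribution `Ber(1/3)^{⊗n}` on `𝔽₂ⁿ`. -/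
noncomputable def ber13 {n : ℕ} (y : Fin n → ZMod 2) : ℝ :=
  (1 / 3 : ℝ) ^ (Finset.univ.filter fun i => y i = 1).card *
    (2 / 3 : ℝ) ^ (n - (Finset.univ.filter fun i => y i = 1).card)

/-- `P : 𝔽₂^m → 𝔽₂` has degree at most `d`. -/
def DegLE {m : ℕ} (d : ℕ) (P : (Fin m → ZMod 2) → ZMod 2) : Prop :=
  ∃ p : MvPolynomial (Fin m) (ZMod 2), p.totalDegree ≤ d ∧ ∀ x, MvPolynomial.eval x p = P x

/-- `rank_{d'}(P) ≤ k`. -/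
def RankLE {m : ℕ} (d' k : ℕ) (P : (Fin m → ZMod 2) → ZMod 2) : Prop :=
  ∃ (Q : Fin k → (Fin m → ZMod 2) → ZMod 2) (Γ : (Fin k → ZMod 2) → ZMod 2),
    (∀ j, DegLE d' (Q j)) ∧ ∀ x, P x = Γ (fun j => Q j x)

/-- `Pr_{X uniform}[P(X) = 1]`. -/
noncomputable def prOne {m : ℕ} (P : (Fin m → ZMod 2) → ZMod 2) : ℝ :=
  distOf P 1

theorem DegLE.map_add_add_map_zero {m : ℕ} {P : (Fin m → ZMod 2) → ZMod 2} (hP : DegLE 1 P)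
    (x y : Fin m → ZMod 2) : P (x + y) + P 0 = P x + P y := by
  obtain ⟨p, hp, hpP⟩ := hP
  simp only [← hpP, MvPolynomial.eval_eq', ← sum_add_distrib]
  refine sum_congr rfl fun d hd => ?_
  rcases Nat.le_one_iff_eq_zero_or_eq_one.mp ((MvPolynomial.le_totalDegree hd).trans hp)
    with h0 | h1
  · simp [(Finsupp.degree_eq_zero_iff d).mp h0]
  · obtain ⟨j, rfl⟩ := (Finsupp.sum_eq_one_iff d).mp h1
    simp [Finsupp.single_apply, pow_ite, mul_add]

theorem exists_addMonoidHom_of_map_add_add_map_zero {G H : Type*} [AddCommGroup G]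
    [AddCommGroup H] {f : G → H} (hf : ∀ x y, f (x + y) + f 0 = f x + f y) :
    ∃ φ : G →+ H, ∀ x, f x = φ x + f 0 :=
  ⟨AddMonoidHom.mk' (fun x => f x - f 0) fun x y => by
      rw [eq_sub_of_add_eq (hf x y)]; abel, fun x => (sub_add_cancel _ _).symm⟩

def AffineClosed {G : Type*} [AddCommGroup G] (A : Finset G) : Prop :=
  ∀ a ∈ A, ∀ b ∈ A, ∀ c ∈ A, a - b + c ∈ A

section AffineClosed

variable {G H : Type*} [AddCommGroup G] [AddCommGroup H] [DecidableEq H]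

theorem AffineClosed.card_filter_eq {A : Finset G} (hA : AffineClosed A) (φ : G →+ H)
    {a b : G} (ha : a ∈ A) (hb : b ∈ A) :
    #{y ∈ A | φ y = φ a} = #{y ∈ A | φ y = φ b} := by
  refine card_bij' (fun y _ => y - a + b) (fun y _ => y - b + a) ?_ ?_ (by simp) (by simp)
  · intro y hy
    rw [mem_filter] at hy ⊢
    exact ⟨hA y hy.1 a ha b hb, by simp [hy.2]⟩
  · intro y hy
    rw [mem_filter] at hy ⊢
    exact ⟨hA y hy.1 b hb a ha, by simp [hy.2]⟩

theorem AffineClosed.card_filter_eq_or {A : Finset G} (hA : AffineClosed A) (φ : G →+ H)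
    (s t : H) :
    #{y ∈ A | φ y = s} = #{y ∈ A | φ y = t} ∨ #{y ∈ A | φ y = s} = 0 ∨
      #{y ∈ A | φ y = t} = 0 := by
  by_contra! h
  obtain ⟨a, ha⟩ := card_ne_zero.mp h.2.1
  obtain ⟨b, hb⟩ := card_ne_zero.mp h.2.2
  rw [mem_filter] at ha hb
  apply h.1
  rw [← ha.2, ← hb.2]
  exact hA.card_filter_eq φ ha.1 hb.1

variable [Fintype G]

theorem affineClosed_univ : AffineClosed (univ : Finset G) :=
  fun _ _ _ _ _ _ => mem_univ _

theorem affineClosed_image_add_const (φ : G →+ H) (c : H) :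
    AffineClosed (univ.image fun x => φ x + c) := by
  simp only [AffineClosed, mem_image, mem_univ, true_and]
  rintro _ ⟨x, rfl⟩ _ ⟨y, rfl⟩ _ ⟨z, rfl⟩
  exact ⟨x - y + z, by simp; abel⟩

theorem distOf_add_const_eq_inv_card_image (φ : G →+ H) (c : H) {y : H}
    (hy : y ∈ univ.image fun x => φ x + c) :
    distOf (fun x => φ x + c) y = (#(univ.image fun x => φ x + c) : ℝ)⁻¹ := by
  obtain ⟨a, -, rfl⟩ := mem_image.mp hy
  have hfibre : ∀ x, φ x + c = φ a + c ↔ φ x = φ a := fun x => add_left_inj c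
  have hcard : #(univ.image fun x => φ x + c) * #{x | φ x = φ a} = Fintype.card G := by
    have hfibres : ∀ y ∈ univ.image fun x => φ x + c,
        #{x | φ x + c = y} = #{x | φ x = φ a} := by
      intro y hy
      obtain ⟨b, -, rfl⟩ := mem_image.mp hy
      simp only [add_left_inj]
      exact affineClosed_univ.card_filter_eq φ (mem_univ b) (mem_univ a)
    rw [← card_univ, card_eq_sum_card_image (fun x => φ x + c) univ, sum_congr rfl hfibres,
      sum_const, smul_eq_mul]
  have hG : (Fintype.card G : ℝ) ≠ 0 := by positivity
  rw [distOf, filter_congr fun x _ => hfibre x, ← hcard]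
  push_cast
  field_simp

end AffineClosed

section HeadSlice

variable {R : Type*} [DecidableEq R] {n : ℕ}

def headSlice (A : Finset (Fin (n + 1) → R)) (t : R) : Finset (Fin n → R) :=
  {y ∈ A | y 0 = t}.image Fin.tail

theorem injOn_tail_filter_head_eq (A : Finset (Fin (n + 1) → R)) (t : R) :
    Set.InjOn Fin.tail (↑{y ∈ A | y 0 = t} : Set (Fin (n + 1) → R)) := by
  intro y hy z hz hyz
  rw [mem_coe, mem_filter] at hy hz
  rw [← Fin.cons_self_tail y, ← Fin.cons_self_tail z, hy.2, hz.2, hyz]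

theorem card_headSlice (A : Finset (Fin (n + 1) → R)) (t : R) :
    #(headSlice A t) = #{y ∈ A | y 0 = t} :=
  card_image_of_injOn (injOn_tail_filter_head_eq A t)

theorem sum_headSlice {M : Type*} [AddCommMonoid M] (A : Finset (Fin (n + 1) → R)) (t : R)
    (f : (Fin n → R) → M) :
    ∑ z ∈ headSlice A t, f z = ∑ y ∈ A with y 0 = t, f (Fin.tail y) :=
  sum_image (injOn_tail_filter_head_eq A t)

theorem AffineClosed.headSlice [AddCommGroup R] {A : Finset (Fin (n + 1) → R)}
    (hA : AffineClosed A) (t : R) :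
    AffineClosed (headSlice A t) := by
  simp only [AffineClosed, _root_.headSlice, mem_image, mem_filter]
  rintro _ ⟨a, ⟨ha, ha0⟩, rfl⟩ _ ⟨b, ⟨hb, hb0⟩, rfl⟩ _ ⟨c, ⟨hc, hc0⟩, rfl⟩
  exact ⟨a - b + c, ⟨hA a ha b hb c hc, by simp [ha0, hb0, hc0]⟩, rfl⟩

end HeadSlice

theorem mul_sqrt_add_mul_sqrt_le {q₀ q₁ g : ℝ} (hq₀ : q₀ ≤ g) (hq₁ : q₁ ≤ g)
    (hsum : q₀ + q₁ ≤ √2 * g) {a b : ℕ} (hab : a = b ∨ a = 0 ∨ b = 0) :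
    q₀ * √a + q₁ * √b ≤ g * √(a + b : ℕ) := by
  rcases hab with rfl | rfl | rfl
  · rw [← two_mul, Nat.cast_mul, Nat.cast_two, Real.sqrt_mul zero_le_two, ← add_mul,
      ← mul_assoc, mul_comm g]
    exact mul_le_mul_of_nonneg_right hsum (Real.sqrt_nonneg _)
  · simpa using mul_le_mul_of_nonneg_right hq₁ (Real.sqrt_nonneg b)
  · simpa using mul_le_mul_of_nonneg_right hq₀ (Real.sqrt_nonneg a)

-- The two slices of `A` along the first coordinate are affine, and either have equal size or one
-- of them is empty.
theorem sum_prod_le_of_affineClosed {q : ZMod 2 → ℝ} {g : ℝ} (hq : ∀ c, 0 ≤ q c)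
    (hqg : ∀ c, q c ≤ g) (hsum : q 0 + q 1 ≤ √2 * g) :
    ∀ {n : ℕ} {A : Finset (Fin n → ZMod 2)}, AffineClosed A →
      ∑ y ∈ A, ∏ i, q (y i) ≤ g ^ n * √(#A : ℝ) := by
  intro n
  induction n with
  | zero =>
    intro A _
    have hA : #A ≤ 1 := card_le_univ A |>.trans_eq (by simp)
    interval_cases h : #A <;> simp_all
  | succ n ih =>
    intro A hA
    have hslices : ∀ t, ∑ z ∈ headSlice A t, ∏ i, q (z i) ≤ g ^ n * √(#(headSlice A t) : ℝ) :=
      fun t => ih (hA.headSlice t)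
    have hslice_sum : ∀ t, ∑ y ∈ A with y 0 = t, ∏ i, q (y i) =
        q t * ∑ z ∈ headSlice A t, ∏ i, q (z i) := by
      intro t
      rw [sum_headSlice, mul_sum]
      refine sum_congr rfl fun y hy => ?_
      rw [Fin.prod_univ_succ, (mem_filter.1 hy).2]
      rfl
    have hsplit : ∑ y ∈ A, ∏ i, q (y i) =
        q 0 * ∑ z ∈ headSlice A 0, ∏ i, q (z i) + q 1 * ∑ z ∈ headSlice A 1, ∏ i, q (z i) := by
      rw [← hslice_sum, ← hslice_sum, ← sum_fiberwise A (· 0)]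
      exact Fin.sum_univ_two _
    have hcard : #A = #(headSlice A 0) + #(headSlice A 1) := by
      rw [card_headSlice, card_headSlice,
        card_eq_sum_card_fiberwise (t := univ) fun y _ => mem_coe.2 (mem_univ (y 0))]
      exact Fin.sum_univ_two _
    have hcards : #(headSlice A 0) = #(headSlice A 1) ∨ #(headSlice A 0) = 0 ∨
        #(headSlice A 1) = 0 := by
      simpa only [card_headSlice, Pi.evalAddMonoidHom_apply] using
        hA.card_filter_eq_or (Pi.evalAddMonoidHom _ 0) 0 1
    calc ∑ y ∈ A, ∏ i, q (y i)
        ≤ q 0 * (g ^ n * √(#(headSlice A 0) : ℝ)) + q 1 * (g ^ n * √(#(headSlice A 1) : ℝ)) := by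
          rw [hsplit]
          gcongr ?_ + ?_ <;> [exact mul_le_mul_of_nonneg_left (hslices 0) (hq 0);
            exact mul_le_mul_of_nonneg_left (hslices 1) (hq 1)]
      _ = g ^ n * (q 0 * √(#(headSlice A 0) : ℝ) + q 1 * √(#(headSlice A 1) : ℝ)) := by ring
      _ ≤ g ^ n * (g * √(#A : ℝ)) := by
          rw [hcard]
          exact mul_le_mul_of_nonneg_left (mul_sqrt_add_mul_sqrt_le (hqg 0) (hqg 1) hsum hcards)
            (pow_nonneg ((hq 0).trans (hqg 0)) n)
      _ = g ^ (n + 1) * √(#A : ℝ) := by ring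

theorem add_sub_two_mul_sqrt_mul_le_abs_sub {a b : ℝ} (ha : 0 ≤ a) (hb : 0 ≤ b) :
    a + b - 2 * √(a * b) ≤ |a - b| := by
  obtain ⟨u, hu, rfl⟩ : ∃ u, 0 ≤ u ∧ u ^ 2 = a := ⟨√a, Real.sqrt_nonneg a, Real.sq_sqrt ha⟩
  obtain ⟨v, hv, rfl⟩ : ∃ v, 0 ≤ v ∧ v ^ 2 = b := ⟨√b, Real.sqrt_nonneg b, Real.sq_sqrt hb⟩
  rw [← mul_pow, Real.sqrt_sq (mul_nonneg hu hv)]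
  rcases le_total u v with h | h
  · rw [abs_of_nonpos (by nlinarith)]; nlinarith
  · rw [abs_of_nonneg (by nlinarith)]; nlinarith

theorem one_sub_sum_sqrt_mul_le_tvDist {β : Type*} [Fintype β] {μ ν : β → ℝ}
    (hμ : ∀ y, 0 ≤ μ y) (hν : ∀ y, 0 ≤ ν y) (hμ1 : ∑ y, μ y = 1) (hν1 : ∑ y, ν y = 1) :
    1 - ∑ y, √(μ y * ν y) ≤ tvDist μ ν := by
  have := sum_le_sum fun y (_ : y ∈ univ) => add_sub_two_mul_sqrt_mul_le_abs_sub (hμ y) (hν y)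
  rw [sum_sub_distrib, sum_add_distrib, hμ1, hν1, ← mul_sum] at this
  rw [tvDist]
  linarith

section distOf

variable {α β : Type*} [Fintype α] [DecidableEq β]

theorem distOf_nonneg (f : α → β) (y : β) : 0 ≤ distOf f y := by
  unfold distOf; positivity

theorem sum_distOf [Fintype β] [Nonempty α] (f : α → β) : ∑ y, distOf f y = 1 := by
  simp only [distOf, ← sum_div]
  rw [← Nat.cast_sum, ← card_eq_sum_card_fiberwise fun x _ => mem_univ (f x), card_univ,
    div_self (by positivity)]

theorem distOf_eq_zero_of_notMem_image {f : α → β} {y : β} (hy : y ∉ univ.image f) :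
    distOf f y = 0 := by
  have hfibre : ∀ x ∈ univ, f x ≠ y := fun x _ hx => hy (hx ▸ mem_image_of_mem f (mem_univ x))
  rw [distOf, filter_false_of_mem hfibre, card_empty, Nat.cast_zero, zero_div]

end distOf

noncomputable def bernThird (c : ZMod 2) : ℝ := if c = 1 then 1 / 3 else 2 / 3

theorem ber13_eq_prod {n : ℕ} (y : Fin n → ZMod 2) : ber13 y = ∏ i, bernThird (y i) := by
  simp only [bernThird, prod_ite, prod_const, ber13]
  congr 2
  have := card_filter_add_card_filter_not (s := univ) fun i => y i = 1
  rw [card_univ, Fintype.card_fin] at this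
  omega

theorem ber13_nonneg {n : ℕ} (y : Fin n → ZMod 2) : 0 ≤ ber13 y := by
  unfold ber13; positivity

theorem sum_ber13 (n : ℕ) : ∑ y : Fin n → ZMod 2, ber13 y = 1 := by
  have hbern : ∑ c, bernThird c = 1 := by
    rw [show ∑ c, bernThird c = bernThird 0 + bernThird 1 from Fin.sum_univ_two _]
    norm_num [bernThird]
  simp only [ber13_eq_prod, ← Fintype.prod_sum, hbern, prod_const_one]

theorem sqrt_ber13 {n : ℕ} (y : Fin n → ZMod 2) : √(ber13 y) = ∏ i, √(bernThird (y i)) := by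
  rw [ber13_eq_prod, Real.sqrt_prod _ fun i _ => by unfold bernThird; positivity]

@[simp] theorem bernThird_zero : bernThird 0 = 2 / 3 := by simp [bernThird]

@[simp] theorem bernThird_one : bernThird 1 = 1 / 3 := by simp [bernThird]

theorem sqrt_bernThird_le (c : ZMod 2) : √(bernThird c) ≤ (√(2 / 3) + √(1 / 3)) / √2 := by
  have hs : √2 ^ 2 = 2 := Real.sq_sqrt zero_le_two
  have h23 : √(2 / 3) = √2 * √(1 / 3) := by rw [← Real.sqrt_mul zero_le_two]; norm_num
  have h13 : 0 ≤ √(1 / 3) := Real.sqrt_nonneg _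
  have h2 : 1 ≤ √2 := Real.one_le_sqrt.2 one_le_two
  rw [le_div_iff₀ (by positivity), h23]
  rcases (by decide : ∀ c : ZMod 2, c = 0 ∨ c = 1) c with rfl | rfl
  · rw [bernThird_zero, h23]; nlinarith
  · rw [bernThird_one]; nlinarith

theorem sum_sqrt_distOf_mul_ber13_le {G : Type*} [AddCommGroup G] [Fintype G] {n : ℕ}
    (φ : G →+ (Fin n → ZMod 2)) (c : Fin n → ZMod 2) :
    ∑ y, √(distOf (fun x => φ x + c) y * ber13 y) ≤ ((√(2 / 3) + √(1 / 3)) / √2) ^ n := by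
  set A := univ.image fun x => φ x + c
  have hA : 0 < √(#A : ℝ) :=
    Real.sqrt_pos.2 (by exact_mod_cast (univ_nonempty.image _).card_pos)
  have hbound := sum_prod_le_of_affineClosed (q := fun c => √(bernThird c))
    (fun _ => Real.sqrt_nonneg _) sqrt_bernThird_le
    (by rw [mul_div_cancel₀ _ (by positivity), bernThird_zero, bernThird_one])
    (affineClosed_image_add_const φ c)
  calc ∑ y, √(distOf (fun x => φ x + c) y * ber13 y)
      = ∑ y ∈ A, √(distOf (fun x => φ x + c) y * ber13 y) := by
        refine (sum_subset (subset_univ A) fun y _ hy => ?_).symm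
        rw [distOf_eq_zero_of_notMem_image hy, zero_mul, Real.sqrt_zero]
    _ = (√(#A : ℝ))⁻¹ * ∑ y ∈ A, ∏ i, √(bernThird (y i)) := by
        rw [mul_sum]
        refine sum_congr rfl fun y hy => ?_
        rw [distOf_add_const_eq_inv_card_image φ c hy, Real.sqrt_mul (by positivity), Real.sqrt_inv,
          sqrt_ber13]
    _ ≤ (√(#A : ℝ))⁻¹ * (((√(2 / 3) + √(1 / 3)) / √2) ^ n * √(#A : ℝ)) := by gcongr
    _ = ((√(2 / 3) + √(1 / 3)) / √2) ^ n := by field_simp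

-- `(√(2/3) + √(1/3)) / √2` is the Bhattacharyya coefficient of `Ber(1/3)` and `Ber(1/2)`.
theorem bhattacharyya_third_half_le_two_rpow :
    (√(2 / 3) + √(1 / 3)) / √2 ≤ (2 : ℝ) ^ (-(1 / 100 : ℝ)) := by
  set g := (√(2 / 3) + √(1 / 3)) / √2
  have hg : 0 ≤ g := by positivity
  have hg2 : g ^ 2 = 1 / 2 + √2 / 3 := by
    have h23 : √(2 / 3) = √2 * √(1 / 3) := by rw [← Real.sqrt_mul zero_le_two]; norm_num
    have hs : √2 ^ 2 = 2 := Real.sq_sqrt zero_le_two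
    have h13 : √(1 / 3) ^ 2 = 1 / 3 := Real.sq_sqrt (by norm_num)
    simp only [g, h23, div_pow]
    field_simp
    nlinarith
  have hs : √2 ≤ 1.44 := Real.sqrt_le_iff.2 ⟨by norm_num, by norm_num⟩
  have hg100 : g ^ 100 ≤ 2⁻¹ := calc
    g ^ 100 = (g ^ 2) ^ 50 := by ring
    _ ≤ (49 / 50) ^ 50 := by gcongr; rw [hg2]; linarith
    _ ≤ 2⁻¹ := by norm_num
  calc g = (g ^ 100) ^ ((100 : ℕ)⁻¹ : ℝ) := (Real.pow_rpow_inv_natCast hg (by norm_num)).symm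
    _ ≤ (2⁻¹ : ℝ) ^ ((100 : ℕ)⁻¹ : ℝ) := by gcongr
    _ = (2 : ℝ) ^ (-(1 / 100 : ℝ)) := by
        rw [Real.inv_rpow zero_le_two, Real.rpow_neg zero_le_two]; norm_num

theorem pow_le_two_rpow_neg_mul {g c : ℝ} (hg : 0 ≤ g) (hgc : g ≤ 2 ^ (-c)) (n : ℕ) :
    g ^ n ≤ 2 ^ (-(c * n)) := by
  rw [neg_mul_eq_neg_mul, Real.rpow_mul zero_le_two, Real.rpow_natCast]
  gcongr

/-- Degree-1 distributions are `1 - C·2^{-c·n}`-far from `Ber(1/3)^{⊗n}`. -/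
theorem degree_one_lower_bound :
    ∃ c > (0:ℝ), ∃ C > (0:ℝ), ∀ m n : ℕ, 0 < m → 0 < n →
      ∀ L : Fin n → (Fin m → ZMod 2) → ZMod 2, (∀ i, DegLE 1 (L i)) →
        tvDist (outDist L) ber13 ≥ 1 - C * (2:ℝ) ^ (-(c * (n:ℝ))) := by
  refine ⟨1 / 100, by norm_num, 1, one_pos, fun m n _ _ L hL => ?_⟩
  obtain ⟨φ, hφ⟩ := exists_addMonoidHom_of_map_add_add_map_zero (f := fun x i => L i x)
    fun x y => funext fun i => (hL i).map_add_add_map_zero x y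
  have hout : outDist L = distOf fun x => φ x + fun i => L i 0 := by
    unfold outDist
    simp only [← hφ]
  rw [ge_iff_le, one_mul, hout]
  calc 1 - (2 : ℝ) ^ (-(1 / 100 * (n : ℝ)))
      ≤ 1 - ((√(2 / 3) + √(1 / 3)) / √2) ^ n := by
        gcongr
        exact pow_le_two_rpow_neg_mul (by positivity) bhattacharyya_third_half_le_two_rpow n
    _ ≤ 1 - ∑ y, √(distOf (fun x => φ x + fun i => L i 0) y * ber13 y) := by
        gcongr
        exact sum_sqrt_distOf_mul_ber13_le φ _
    _ ≤ tvDist (distOf fun x => φ x + fun i => L i 0) ber13 :=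
        one_sub_sum_sqrt_mul_le_tvDist (distOf_nonneg _) ber13_nonneg (sum_distOf _) (sum_ber13 n)
end

section
/- For every integer r ≥ 1 and every m, every function P : 𝔽₂^m → 𝔽₂ with rank₂(P) ≤ r satisfies |Pr_{X ~ Unif(𝔽₂^m)}[P(X) = 1] − 1/3| ≥ (1/12)·2^{−((r+2)·2^r + r)}. -/
open Finset

/-!
Write `P = Γ ∘ Q` with `Q = (Q₁, …, Q_r)` quadratic. Expanding the indicator of `Γ⁻¹(1)` in
characters of `𝔽₂^r` gives `Pr[P = 1] = 2^{-r} ∑ₐ Ĉ(a) β(a)`, where `β(a)` is the bias of the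
quadratic function `a · Q`. The square of such a bias is `0` or `|radical| / 2^m`, so
`β(a) ∈ {0, ±2^{-e(a)}}`. A cut `T ≤ (r + 2) 2^r` can be chosen so that the terms with `e(a) > T`
have tiny `ℓ²` mass; by Cauchy–Schwarz and Parseval (`∑_{a ≠ 0} Ĉ(a)² ≤ 4^{r-1}`) they contribute
at most `2^{-(T+r)} / 4`. The remaining terms form a dyadic rational with denominator `2^{T+r}`,
which is at distance at least `2^{-(T+r)} / 3` from `1/3`.
-/

namespace BoundedRankGap

def chi (t : ZMod 2) : ℤ := if t = 0 then 1 else -1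

lemma chi_add : ∀ s t : ZMod 2, chi (s + t) = chi s * chi t := by decide

lemma chi_zero : chi 0 = 1 := rfl

lemma chi_one : chi 1 = -1 := rfl

lemma abs_chi : ∀ t : ZMod 2, |chi t| = 1 := by decide

lemma sum_chi_addMonoidHom {G : Type*} [AddCommGroup G] [Fintype G] (φ : G →+ ZMod 2) :
    ∑ x, chi (φ x) = if φ = 0 then (Fintype.card G : ℤ) else 0 := by
  split_ifs with hφ
  · simp [hφ, chi_zero]
  · obtain ⟨x₀, hx₀⟩ : ∃ x₀, φ x₀ = 1 := by
      by_contra! h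
      exact hφ (AddMonoidHom.ext fun x => (by decide : ∀ t : ZMod 2, t ≠ 1 → t = 0) _ (h x))
    have hshift : ∑ x, chi (φ (x + x₀)) = ∑ x, chi (φ x) :=
      Equiv.sum_comp (Equiv.addRight x₀) fun x => chi (φ x)
    simp only [map_add, hx₀, chi_add, chi_one, mul_neg_one, sum_neg_distrib] at hshift
    linarith

lemma sum_chi_dotProduct_mul {k : ℕ} (y y' : Fin k → ZMod 2) :
    ∑ a : Fin k → ZMod 2, chi (a ⬝ᵥ y) * chi (a ⬝ᵥ y') = if y = y' then 2 ^ k else 0 := by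
  let φ : (Fin k → ZMod 2) →+ ZMod 2 :=
    AddMonoidHom.mk' (fun a => (y - y') ⬝ᵥ a) fun a b => dotProduct_add _ a b
  have hφ : φ = 0 ↔ y = y' := by
    rw [← sub_eq_zero (a := y), ← dotProduct_eq_zero_iff, DFunLike.ext_iff]; rfl
  have hchi : ∀ a, chi (a ⬝ᵥ y) * chi (a ⬝ᵥ y') = chi (φ a) := fun a => by
    rw [← chi_add, AddMonoidHom.mk'_apply, sub_dotProduct, dotProduct_comm y,
      dotProduct_comm y', CharTwo.sub_eq_add]
  simp only [hchi, sum_chi_addMonoidHom, hφ, Fintype.card_fun, ZMod.card, Fintype.card_fin]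
  push_cast; rfl

def bias {G : Type*} [Fintype G] (f : G → ZMod 2) : ℤ := ∑ x, chi (f x)

def indicatorFourier {k : ℕ} (Y : Finset (Fin k → ZMod 2)) (a : Fin k → ZMod 2) : ℤ :=
  ∑ y ∈ Y, chi (a ⬝ᵥ y)

section Fourier

variable {k : ℕ} (Y : Finset (Fin k → ZMod 2))

lemma two_pow_mul_card_filter_mem {α : Type*} [Fintype α] (Q : α → Fin k → ZMod 2) :
    2 ^ k * (#{x | Q x ∈ Y} : ℤ) = ∑ a, indicatorFourier Y a * bias fun x => a ⬝ᵥ Q x := by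
  calc 2 ^ k * (#{x | Q x ∈ Y} : ℤ)
      = ∑ x, ∑ y ∈ Y, ∑ a : Fin k → ZMod 2, chi (a ⬝ᵥ y) * chi (a ⬝ᵥ Q x) := by
        simp [sum_chi_dotProduct_mul, sum_ite, mul_comm]
    _ = ∑ y ∈ Y, ∑ a : Fin k → ZMod 2, ∑ x, chi (a ⬝ᵥ y) * chi (a ⬝ᵥ Q x) := by
        rw [sum_comm]
        exact sum_congr rfl fun y _ => sum_comm
    _ = _ := by
        simp only [indicatorFourier, bias, sum_mul_sum]
        exact sum_comm

lemma indicatorFourier_zero : indicatorFourier Y 0 = #Y := by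
  simp [indicatorFourier, chi_zero]

lemma sum_indicatorFourier_sq : ∑ a, indicatorFourier Y a ^ 2 = 2 ^ k * #Y := by
  calc ∑ a, indicatorFourier Y a ^ 2
      = ∑ y ∈ Y, ∑ y' ∈ Y, ∑ a : Fin k → ZMod 2, chi (a ⬝ᵥ y) * chi (a ⬝ᵥ y') := by
        simp only [sq, indicatorFourier, sum_mul_sum]
        rw [sum_comm]
        exact sum_congr rfl fun y _ => sum_comm
    _ = 2 ^ k * #Y := by simp [sum_chi_dotProduct_mul, mul_comm]

lemma four_mul_sum_erase_zero_indicatorFourier_sq_le :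
    4 * ∑ a ∈ univ.erase 0, indicatorFourier Y a ^ 2 ≤ 4 ^ k := by
  have hsplit := Finset.add_sum_erase univ (fun a => indicatorFourier Y a ^ 2) (mem_univ 0)
  rw [sum_indicatorFourier_sq, indicatorFourier_zero] at hsplit
  have h4 : (4 : ℤ) ^ k = (2 ^ k) ^ 2 := by rw [← pow_mul, mul_comm, pow_mul]; norm_num
  nlinarith [sq_nonneg ((2 : ℤ) ^ k - 2 * #Y)]

end Fourier

section ThirdDifference

variable {G : Type*} [AddCommGroup G]

def VanishingThirdDiff (f : G → ZMod 2) : Prop :=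
  ∀ x y z, f (x + y + z) + f (x + y) + f (x + z) + f (y + z) + f x + f y + f z + f 0 = 0

lemma VanishingThirdDiff.sum {κ : Type*} (s : Finset κ) (c : κ → ZMod 2) {g : κ → G → ZMod 2}
    (hg : ∀ i ∈ s, VanishingThirdDiff (g i)) :
    VanishingThirdDiff fun x => ∑ i ∈ s, c i * g i x := by
  intro x y z
  simp only [← sum_add_distrib]
  exact sum_eq_zero fun i hi => by linear_combination c i * hg i hi x y z

end ThirdDifference

lemma vanishingThirdDiff_prod {ι : Type*} {t : Finset ι} (ht : #t ≤ 2) :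
    VanishingThirdDiff fun x : ι → ZMod 2 => ∏ i ∈ t, x i := by
  classical
  intro x y z
  interval_cases h : #t
  · simp only [card_eq_zero.1 h, prod_empty]; decide
  · obtain ⟨i, rfl⟩ := card_eq_one.1 h
    simp only [prod_singleton, Pi.add_apply, Pi.zero_apply]
    grind
  · obtain ⟨i, j, hij, rfl⟩ := card_eq_two.1 h
    simp only [prod_pair hij, Pi.add_apply, Pi.zero_apply]
    grind

lemma pow_eq_self_of_ne_zero (x : ZMod 2) {n : ℕ} (hn : n ≠ 0) : x ^ n = x := by
  fin_cases x
  exacts [zero_pow hn, one_pow n]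

lemma DegLE.vanishingThirdDiff {m : ℕ} {f : (Fin m → ZMod 2) → ZMod 2} (hf : DegLE 2 f) :
    VanishingThirdDiff f := by
  obtain ⟨p, hp, hpf⟩ := hf
  have hf : f = fun x => ∑ d ∈ p.support, p.coeff d * ∏ i ∈ d.support, x i := by
    funext x
    rw [← hpf, MvPolynomial.eval_eq]
    refine sum_congr rfl fun d _ => congrArg _ (prod_congr rfl fun i hi => ?_)
    exact pow_eq_self_of_ne_zero _ (Finsupp.mem_support_iff.1 hi)
  rw [hf]
  refine VanishingThirdDiff.sum _ _ fun d hd => vanishingThirdDiff_prod ?_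
  calc #d.support = #d.support • 1 := (nsmul_one _).symm
    _ ≤ ∑ i ∈ d.support, d i := card_nsmul_le_sum _ _ _ fun i hi =>
        Nat.one_le_iff_ne_zero.2 (Finsupp.mem_support_iff.1 hi)
    _ ≤ 2 := (MvPolynomial.le_totalDegree hd).trans hp

lemma natAbs_bias_le {G : Type*} [Fintype G] (f : G → ZMod 2) :
    (bias f).natAbs ≤ Fintype.card G := by
  have : |bias f| ≤ Fintype.card G := by
    simpa [bias, abs_chi] using abs_sum_le_sum_abs (fun x => chi (f x)) univ
  rw [Int.abs_eq_natAbs] at this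
  exact_mod_cast this

section Bias

variable {G : Type*} [AddCommGroup G] {f : G → ZMod 2}

variable (f) in
def radical : AddSubgroup G where
  carrier := {z | ∀ x, f (x + z) = f x + f z + f 0}
  zero_mem' x := by simp only [add_zero]; grind
  add_mem' {z z'} hz hz' x := by
    have := hz' z
    rw [← add_assoc, hz', hz]; grind
  neg_mem' {z} hz x := by
    have h1 := hz (x - z)
    have h2 := hz (-z)
    simp only [sub_add_cancel, neg_add_cancel] at h1 h2
    show f (x + -z) = f x + f (-z) + f 0
    rw [← sub_eq_add_neg]
    grind

def derivHom (hf : VanishingThirdDiff f) (z : G) : G →+ ZMod 2 :=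
  AddMonoidHom.mk' (fun x => f (x + z) + f x + f z + f 0) fun x y => by
    have := hf x y z
    grind

lemma derivHom_eq_zero_iff (hf : VanishingThirdDiff f) (z : G) :
    derivHom hf z = 0 ↔ z ∈ radical f := by
  simp only [DFunLike.ext_iff, derivHom, AddMonoidHom.mk'_apply, AddMonoidHom.zero_apply]
  exact forall_congr' fun x => by grind

variable (f) in
def radicalHom : radical f →+ ZMod 2 :=
  AddMonoidHom.mk' (fun z => f z + f 0) fun z z' => by
    have := z'.2 z
    simp only [AddSubgroup.coe_add]
    grind

variable [Fintype G]

lemma bias_mul_self (f : G → ZMod 2) : bias f * bias f = ∑ z, ∑ x, chi (f x + f (x + z)) := by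
  rw [bias, sum_mul_sum]
  conv_rhs => rw [sum_comm]
  refine sum_congr rfl fun x _ => ?_
  rw [← Equiv.sum_comp (Equiv.addLeft x)]
  simp [chi_add]

open Classical in
lemma sum_chi_add_add (hf : VanishingThirdDiff f) (z : G) :
    ∑ x, chi (f x + f (x + z))
      = chi (f z + f 0) * if z ∈ radical f then (Fintype.card G : ℤ) else 0 := by
  have hsplit : ∀ x, f x + f (x + z) = derivHom hf z x + (f z + f 0) := fun x => by
    simp only [derivHom, AddMonoidHom.mk'_apply]; grind
  simp only [hsplit, chi_add, ← sum_mul, sum_chi_addMonoidHom, derivHom_eq_zero_iff]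
  ring

open Classical in
lemma bias_mul_self_eq (hf : VanishingThirdDiff f) :
    bias f * bias f = Fintype.card G * ∑ z : radical f, chi (radicalHom f z) := by
  rw [bias_mul_self]
  simp only [sum_chi_add_add hf, mul_ite, mul_zero, ← sum_filter]
  rw [sum_subtype _ (fun z => mem_filter.trans ⟨fun h => h.2, fun h => ⟨mem_univ z, h⟩⟩), mul_sum]
  exact sum_congr rfl fun z _ => mul_comm _ _

end Bias

lemma bias_eq_zero_or_natAbs_mul_two_pow {m : ℕ} {f : (Fin m → ZMod 2) → ZMod 2}
    (hf : VanishingThirdDiff f) : bias f = 0 ∨ ∃ e, (bias f).natAbs * 2 ^ e = 2 ^ m := by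
  classical
  have hG : Fintype.card (Fin m → ZMod 2) = 2 ^ m := by simp
  have hsq := bias_mul_self_eq hf
  rw [sum_chi_addMonoidHom, hG] at hsq
  split_ifs at hsq
  · right
    have hK : Fintype.card (radical f) ∣ 2 ^ m := by
      simpa [Nat.card_eq_fintype_card, hG] using (radical f).card_addSubgroup_dvd_card
    obtain ⟨k, -, hk⟩ := (Nat.dvd_prime_pow Nat.prime_two).1 hK
    have hsq' : (bias f).natAbs * (bias f).natAbs = 2 ^ (m + k) := by
      rw [← Int.natAbs_mul, hsq, hk, ← Nat.cast_mul, Int.natAbs_natCast, pow_add]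
    obtain ⟨j, -, hj⟩ := (Nat.dvd_prime_pow Nat.prime_two).1 (Dvd.intro _ hsq')
    have hjm : j ≤ m := (Nat.pow_le_pow_iff_right (by norm_num)).1 (hj ▸ hG ▸ natAbs_bias_le f)
    exact ⟨m - j, by rw [hj, ← pow_add, Nat.add_sub_cancel' hjm]⟩
  · left
    simpa using hsq

lemma exists_abs_le_and_mul_two_pow_eq_int {m : ℕ} {f : (Fin m → ZMod 2) → ZMod 2}
    (hf : VanishingThirdDiff f) :
    ∃ e : ℕ, |(bias f : ℝ) / 2 ^ m| ≤ (1 / 2) ^ e ∧ ∃ z : ℤ, (bias f : ℝ) / 2 ^ m * 2 ^ e = z := by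
  rcases bias_eq_zero_or_natAbs_mul_two_pow hf with h | ⟨e, he⟩
  · exact ⟨0, by simp [h], 0, by simp [h]⟩
  have he' : ((bias f).natAbs : ℝ) * 2 ^ e = 2 ^ m := by exact_mod_cast he
  have hne : ((bias f).natAbs : ℝ) ≠ 0 := fun h => by
    rw [h, zero_mul] at he'; exact (pow_pos two_pos m).ne he'
  refine ⟨e, le_of_eq ?_, (bias f).sign, ?_⟩
  · rw [abs_div, abs_of_pos (by positivity : (0 : ℝ) < 2 ^ m), ← Int.cast_abs,
      Int.abs_eq_natAbs, Int.cast_natCast, ← he', ← div_div, div_self hne, ← one_div_pow]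
  · have hs := congrArg (Int.cast : ℤ → ℝ) (Int.sign_mul_natAbs (bias f))
    rw [Int.cast_mul, Int.cast_natCast] at hs
    rw [← hs, ← he']
    field_simp

lemma prOne_comp_eq {m k : ℕ} (Q : (Fin m → ZMod 2) → Fin k → ZMod 2)
    (Γ : (Fin k → ZMod 2) → ZMod 2) :
    prOne (fun x => Γ (Q x)) = (∑ a, indicatorFourier {y | Γ y = 1} a *
      ((bias fun x => a ⬝ᵥ Q x : ℝ) / 2 ^ m)) / 2 ^ k := by
  have h := congrArg (Int.cast : ℤ → ℝ) (two_pow_mul_card_filter_mem {y | Γ y = 1} Q)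
  simp only [mem_filter, mem_univ, true_and] at h
  push_cast at h
  simp only [prOne, distOf, Fintype.card_fun, ZMod.card, Fintype.card_fin, mul_div_assoc',
    ← sum_div, ← h]
  push_cast
  field_simp

section Cut

variable {ι : Type*} (r : ℕ)

-- The inductive step of `exists_cut`: the cut may advance to `M` at a cost of at most `r + 2` per
-- exponent it passes.
lemma exists_window (s : Finset ι) (h : ι → ℕ) (hs : #s ≤ 2 ^ r)
    (hbig : (1 / 4 : ℝ) ^ (r + 1) < ∑ a ∈ s, (1 / 4 : ℝ) ^ h a) :
    ∃ M, (∃ a ∈ s, h a ≤ M) ∧ M ≤ (r + 2) * #{a ∈ s | h a ≤ M} := by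
  by_cases hlow : ∃ a ∈ s, h a ≤ r + 2
  · obtain ⟨a, ha, hah⟩ := hlow
    have : 0 < #{a ∈ s | h a ≤ r + 2} := card_pos.2 ⟨a, mem_filter.2 ⟨ha, hah⟩⟩
    exact ⟨r + 2, ⟨a, ha, hah⟩, Nat.le_mul_of_pos_right _ this⟩
  push Not at hlow
  -- at most one exponent in `(r + 2, 2r + 1]` cannot account for a sum above `(1/4)^(r+1)`
  have hW : 2 ≤ #{a ∈ s | h a ≤ 2 * r + 1} := by
    by_contra! hW
    have hnear : ∑ a ∈ s with h a ≤ 2 * r + 1, (1 / 4 : ℝ) ^ h a ≤ (1 / 4) ^ (r + 3) := by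
      refine (sum_le_card_nsmul _ _ ((1 / 4 : ℝ) ^ (r + 3)) fun a ha => ?_).trans ?_
      · exact pow_le_pow_of_le_one (by norm_num) (by norm_num) (hlow a (mem_filter.1 ha).1)
      · rw [nsmul_eq_mul]
        exact mul_le_of_le_one_left (by positivity) (by exact_mod_cast Nat.lt_succ_iff.1 hW)
    have hfar : ∑ a ∈ s with ¬h a ≤ 2 * r + 1, (1 / 4 : ℝ) ^ h a ≤ (1 / 4) ^ (r + 2) := by
      refine (sum_le_card_nsmul _ _ ((1 / 4 : ℝ) ^ (2 * r + 2)) fun a ha => ?_).trans ?_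
      · exact pow_le_pow_of_le_one (by norm_num) (by norm_num) (by grind)
      · have hcard : (#{a ∈ s | ¬h a ≤ 2 * r + 1} : ℝ) ≤ 2 ^ r :=
          by exact_mod_cast (card_filter_le _ _).trans hs
        have h2 : (2 : ℝ) ^ r * (1 / 4) ^ (2 * r + 2) = (1 / 2) ^ r * (1 / 4) ^ (r + 2) := by
          rw [show 2 * r + 2 = r + (r + 2) by ring, pow_add, ← mul_assoc, ← mul_pow]; norm_num
        rw [nsmul_eq_mul]
        calc _ ≤ (2 : ℝ) ^ r * (1 / 4) ^ (2 * r + 2) := by gcongr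
          _ ≤ _ := by
            rw [h2]
            exact mul_le_of_le_one_left (by positivity) (pow_le_one₀ (by norm_num) (by norm_num))
    rw [← sum_filter_add_sum_filter_not s (fun a => h a ≤ 2 * r + 1)] at hbig
    have : (1 / 4 : ℝ) ^ (r + 3) + (1 / 4) ^ (r + 2) < (1 / 4) ^ (r + 1) := by
      simp only [pow_succ]; nlinarith [pow_pos (by norm_num : (0 : ℝ) < 1 / 4) r]
    linarith
  obtain ⟨a, ha⟩ := card_pos.1 (by omega : 0 < #{a ∈ s | h a ≤ 2 * r + 1})
  exact ⟨2 * r + 1, ⟨a, mem_filter.1 ha |>.1, mem_filter.1 ha |>.2⟩, by nlinarith⟩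

theorem exists_cut (s : Finset ι) (h : ι → ℕ) (hs : #s ≤ 2 ^ r) :
    ∃ T ≤ (r + 2) * #s, ∑ a ∈ s with T < h a, (1 / 4 : ℝ) ^ h a ≤ (1 / 4) ^ (T + r + 1) := by
  induction s using Finset.strongInduction generalizing h with
  | H s ih =>
  by_cases hsmall : ∑ a ∈ s, (1 / 4 : ℝ) ^ h a ≤ (1 / 4) ^ (r + 1)
  · refine ⟨0, Nat.zero_le _, ?_⟩
    rw [zero_add]
    exact (sum_le_sum_of_subset_of_nonneg (filter_subset _ s) fun _ _ _ => by positivity).trans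
      hsmall
  obtain ⟨M, ⟨a, ha, haM⟩, hM⟩ := exists_window r s h hs (not_le.1 hsmall)
  set s' := s.filter fun a => M < h a with hs'
  have hss : s' ⊂ s := filter_ssubset.2 ⟨a, ha, not_lt.2 haM⟩
  obtain ⟨T', hT', htail⟩ := ih s' hss (fun a => h a - M) ((card_le_card hss.subset).trans hs)
  refine ⟨M + T', ?_, ?_⟩
  · have hcard : #{a ∈ s | h a ≤ M} + #s' = #s := by
      simpa only [not_le] using card_filter_add_card_filter_not (s := s) fun a => h a ≤ M
    calc M + T' ≤ (r + 2) * #{a ∈ s | h a ≤ M} + (r + 2) * #s' := add_le_add hM hT'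
      _ = (r + 2) * #s := by rw [← mul_add, hcard]
  · have hfilter : s.filter (fun a => M + T' < h a) = s'.filter fun a => T' < h a - M := by
      rw [hs', filter_filter]
      exact filter_congr fun a _ => by omega
    calc ∑ a ∈ s with M + T' < h a, (1 / 4 : ℝ) ^ h a
        = (1 / 4) ^ M * ∑ a ∈ s' with T' < h a - M, (1 / 4 : ℝ) ^ (h a - M) := by
          rw [hfilter, mul_sum]
          refine sum_congr rfl fun a ha => ?_
          simp only [hs', mem_filter] at ha
          rw [← pow_add, Nat.add_sub_cancel' ha.1.2.le]
      _ ≤ (1 / 4) ^ M * (1 / 4) ^ (T' + r + 1) := by gcongr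
      _ = (1 / 4) ^ (M + T' + r + 1) := by rw [← pow_add]; ring_nf

end Cut

lemma one_twelfth_le_abs_int_add_sub (z : ℤ) {E : ℝ} (hE : |E| ≤ 1 / 4) (k : ℕ) :
    1 / 12 ≤ |z + E - 2 ^ k / 3| := by
  have hndvd : ¬(3 : ℤ) ∣ 2 ^ k := fun h => by
    have := Int.prime_three.dvd_of_dvd_pow h; norm_num at this
  have hgap : (1 : ℝ) ≤ |3 * (z : ℝ) - 2 ^ k| := by
    exact_mod_cast Int.one_le_abs (sub_ne_zero.2 fun h => hndvd ⟨z, h.symm⟩)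
  have hsplit : |3 * (z : ℝ) - 2 ^ k| ≤ 3 * (|z + E - 2 ^ k / 3| + |E|) := by
    calc |3 * (z : ℝ) - 2 ^ k| = 3 * |(z + E - 2 ^ k / 3) - E| := by
          rw [← abs_of_pos (by norm_num : (0 : ℝ) < 3), ← abs_mul]; ring_nf
      _ ≤ _ := by gcongr; exact abs_sub _ _
  linarith

lemma abs_sum_mul_le_quarter {A : Type*} (r : ℕ) (t : Finset A) (C b : A → ℝ)
    (hC : 4 * ∑ a ∈ t, C a ^ 2 ≤ 4 ^ r) (hb : ∑ a ∈ t, b a ^ 2 ≤ (1 / 4) ^ (r + 1)) :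
    |∑ a ∈ t, C a * b a| ≤ 1 / 4 := by
  refine abs_le_of_sq_le_sq ((sum_mul_sq_le_sq_mul_sq t C b).trans ?_) (by norm_num)
  have h4 : (4 : ℝ) ^ r * (1 / 4) ^ r = 1 := by rw [← mul_pow]; norm_num
  calc (∑ a ∈ t, C a ^ 2) * ∑ a ∈ t, b a ^ 2 ≤ (4 ^ r / 4) * (1 / 4) ^ (r + 1) := by
        exact mul_le_mul (by linarith) hb (sum_nonneg fun _ _ => sq_nonneg _) (by positivity)
    _ = (1 / 4) ^ 2 := by rw [pow_succ]; field_simp; linear_combination h4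

lemma exists_int_eq_sum_mul_two_pow {A : Type*} (s : Finset A) (C : A → ℤ) (β : A → ℝ)
    (e : A → ℕ) (hβint : ∀ a, ∃ z : ℤ, β a * 2 ^ e a = z) {T : ℕ} (hs : ∀ a ∈ s, e a ≤ T) :
    ∃ z : ℤ, z = ∑ a ∈ s, C a * (β a * 2 ^ T) := by
  refine Subring.mem_bot.1 (Subring.sum_mem (⊥ : Subring ℝ) fun a ha => ?_)
  obtain ⟨n, hn⟩ := hβint a
  rw [← Nat.add_sub_cancel' (hs a ha), pow_add, ← mul_assoc (β a), hn]
  exact Subring.mul_mem _ (intCast_mem _ _)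
    (Subring.mul_mem _ (intCast_mem _ _) (Subring.pow_mem _ (natCast_mem _ 2) _))

lemma sq_mul_two_pow_le {b : ℝ} {e : ℕ} (hb : |b| ≤ (1 / 2) ^ e) (T : ℕ) :
    (b * 2 ^ T) ^ 2 ≤ 4 ^ T * (1 / 4) ^ e := by
  have h4 : ((2 : ℝ) ^ T) ^ 2 = 4 ^ T := by rw [← pow_mul, mul_comm, pow_mul]; norm_num
  have hsq : b ^ 2 ≤ (1 / 4) ^ e := by
    rw [show (1 / 4 : ℝ) = (1 / 2) ^ 2 by norm_num, ← pow_mul, mul_comm, pow_mul]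
    exact sq_le_sq' (neg_le_of_abs_le hb) (le_of_abs_le hb)
  rw [mul_pow, h4, mul_comm]
  gcongr

theorem one_twelfth_mul_inv_le_abs_sub {A : Type*} [Fintype A] [DecidableEq A] (r : ℕ)
    (hA : Fintype.card A ≤ 2 ^ r) (a₀ : A) (C : A → ℤ) (β : A → ℝ) (e : A → ℕ)
    (hC : 4 * ∑ a ∈ univ.erase a₀, C a ^ 2 ≤ 4 ^ r) (he₀ : e a₀ = 0)
    (hβ : ∀ a, |β a| ≤ (1 / 2) ^ e a) (hβint : ∀ a, ∃ z : ℤ, β a * 2 ^ e a = z) :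
    1 / 12 * ((2 : ℝ) ^ ((r + 2) * 2 ^ r + r))⁻¹ ≤ |(∑ a, C a * β a) / 2 ^ r - 1 / 3| := by
  obtain ⟨T, hT, htail⟩ := exists_cut r univ e (card_univ (α := A) ▸ hA)
  -- scaled by `2 ^ T`, the terms with `e a ≤ T` are integers and the others are small
  obtain ⟨z, hz⟩ := exists_int_eq_sum_mul_two_pow {a | ¬T < e a} C β e hβint
    fun a ha => not_lt.1 (mem_filter.1 ha).2
  have hsmall : |∑ a with T < e a, C a * (β a * 2 ^ T)| ≤ 1 / 4 := by
    refine abs_sum_mul_le_quarter r _ _ _ ?_ ?_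
    · have hsub : ({a | T < e a} : Finset A) ⊆ univ.erase a₀ := fun a ha =>
        mem_erase.2 ⟨fun h => by simp [h, he₀] at ha, mem_univ a⟩
      exact_mod_cast (mul_le_mul_of_nonneg_left (sum_le_sum_of_subset_of_nonneg hsub
        fun _ _ _ => sq_nonneg _) (by norm_num)).trans hC
    · calc ∑ a with T < e a, (β a * 2 ^ T) ^ 2 ≤ ∑ a with T < e a, 4 ^ T * (1 / 4) ^ e a :=
            sum_le_sum fun a _ => sq_mul_two_pow_le (hβ a) T
        _ ≤ 4 ^ T * (1 / 4) ^ (T + r + 1) := by rw [← mul_sum]; gcongr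
        _ = (1 / 4) ^ (r + 1) := by rw [add_assoc, pow_add, ← mul_assoc, ← mul_pow]; norm_num
  have hscale : (∑ a, C a * β a) / 2 ^ r - 1 / 3
      = (z + ∑ a with T < e a, C a * (β a * 2 ^ T) - 2 ^ (T + r) / 3) / 2 ^ (T + r) := by
    have hsum : ∑ a, C a * (β a * 2 ^ T) = (∑ a, C a * β a) * 2 ^ T := by
      rw [sum_mul]; exact sum_congr rfl fun _ _ => by ring
    rw [hz, sum_filter_not_add_sum_filter, hsum, pow_add]
    field_simp
  have hTr : T + r ≤ (r + 2) * 2 ^ r + r := by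
    have := Nat.mul_le_mul_left (r + 2) (card_univ (α := A) ▸ hA); omega
  calc 1 / 12 * ((2 : ℝ) ^ ((r + 2) * 2 ^ r + r))⁻¹ ≤ 1 / 12 / 2 ^ (T + r) := by
        rw [div_eq_mul_inv (1 / 12 : ℝ)]; gcongr; norm_num
    _ ≤ _ := by
        rw [hscale, abs_div, abs_of_pos (by positivity : (0 : ℝ) < 2 ^ (T + r))]
        gcongr
        exact one_twelfth_le_abs_int_add_sub z hsmall (T + r)

end BoundedRankGap

/-- explicit gap from `1/3` for functions of bounded quadratic rank. -/
theorem bounded_rank2_gap :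
    ∀ r : ℕ, 1 ≤ r → ∀ m : ℕ, ∀ P : (Fin m → ZMod 2) → ZMod 2,
      RankLE 2 r P →
      |prOne P - 1/3| ≥ (1/12) * ((2:ℝ) ^ ((r + 2) * 2 ^ r + r))⁻¹ := by
  open BoundedRankGap in
  intro r _ m P ⟨Q, Γ, hQ, hPQ⟩
  obtain rfl : P = fun x => Γ fun j => Q j x := funext hPQ
  have hquad (a : Fin r → ZMod 2) : VanishingThirdDiff fun x => a ⬝ᵥ fun j => Q j x :=
    VanishingThirdDiff.sum univ a fun j _ => (hQ j).vanishingThirdDiff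
  choose e hβ hβint using fun a => exists_abs_le_and_mul_two_pow_eq_int (hquad a)
  have he₀ : e 0 = 0 := by
    by_contra h
    have := (hβ 0).trans_lt (pow_lt_one₀ (by norm_num) (by norm_num) h)
    simp [bias, chi_zero] at this
  rw [prOne_comp_eq, ge_iff_le]
  exact one_twelfth_mul_inv_le_abs_sub r (by simp) 0 _ _ e
    (four_mul_sum_erase_zero_indicatorFourier_sq_le _) he₀ hβ hβint
end

section
/- Let P : 𝔽₂^m → 𝔽₂ be a function with rank₂(P) ≤ r. Then for every integer t > 0 there exist an integer s with 0 ≤ s ≤ (r+t)·2^r + r and an integer A ∈ ℤ such that |E_{X ~ Unif(𝔽₂^m)}[(−1)^{P(X)}] − A/2^s| ≤ 2^{−t}·2^{−s}. -/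
open Finset

/-- The signed bias `E_{X uniform}[(-1)^{P(X)}]`. -/
noncomputable def signedBias {m : ℕ} (P : (Fin m → ZMod 2) → ZMod 2) : ℝ :=
  (∑ x : Fin m → ZMod 2, (if P x = 0 then (1:ℝ) else -1)) / (2:ℝ) ^ m

/-!
Write `P = Γ ∘ (Q₁, …, Q_r)`. Fourier expansion of `(-1)^Γ` on `𝔽₂ʳ` gives
`bias P = 2⁻ʳ ∑ₐ Γ̂(a) · bias (a ⬝ Q)` with `|Γ̂(a)| ≤ 2ʳ`. Each `a ⬝ Q` is quadratic, and the
square of the bias of a quadratic function is `0` or `|V| / 2ᵐ`, where `V` is the radical of its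
polarisation; so that bias is `0` or `±2⁻ʰ`. Hence `bias P = 2⁻ʳ ∑ₐ nₐ 2^(-hₐ)` with `|nₐ| ≤ 2ʳ`
and `h₀ = 0`, so at most `2ʳ - 1` terms are not integers. Cutting the sum at the first level `c`
where the remaining tail is at most `2^(-t-c)` gives the approximation with `s = r + c`, and a
doubling argument on the tail bounds `2ᶜ ≤ ∏ (1 + 2ᵗ |nₐ|) ≤ (1 + 2^(t+r))^(2ʳ-1) ≤ 2^((r+t) 2ʳ)`.
-/

namespace QuadraticRankBias

def chi : AddChar (ZMod 2) ℤ where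
  toFun v := if v = 0 then 1 else -1
  map_zero_eq_one' := rfl
  map_add_eq_mul' := by decide

lemma chi_apply (v : ZMod 2) : chi v = if v = 0 then 1 else -1 := rfl

lemma abs_chi (v : ZMod 2) : |chi v| = 1 := by
  rw [chi_apply]; split_ifs <;> simp

lemma chi_eq_one_iff (v : ZMod 2) : chi v = 1 ↔ v = 0 := by
  revert v; decide

lemma abs_sum_chi_le {X : Type*} [Fintype X] (f : X → ZMod 2) :
    |∑ x, chi (f x)| ≤ Fintype.card X := by
  simpa [abs_chi] using Finset.abs_sum_le_sum_abs (fun x => chi (f x)) Finset.univ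

section CharacterSums

variable {G : Type*} [AddCommGroup G] [Fintype G]

lemma sum_chi_addMonoidHom (f : G →+ ZMod 2) [Decidable (f = 0)] :
    ∑ x, chi (f x) = if f = 0 then (Fintype.card G : ℤ) else 0 := by
  classical
  have hψ : chi.compAddMonoidHom f = 0 ↔ f = 0 := by
    simp [chi_eq_one_iff, DFunLike.ext_iff]
  simpa [hψ] using AddChar.sum_eq_ite (chi.compAddMonoidHom f)

end CharacterSums

section Quadratic

variable {G : Type*} [AddCommGroup G]

/-- Degree at most two, in the form: all third finite differences of `q` vanish. -/
def IsQuadratic (q : G → ZMod 2) : Prop :=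
  ∀ x d e, q (x + d + e) + q (x + d) + q (x + e) + q x = q (d + e) + q d + q e + q 0

def polar (q : G → ZMod 2) (d x : G) : ZMod 2 := q (x + d) + q x + q d + q 0

lemma polar_comm (q : G → ZMod 2) (d x : G) : polar q d x = polar q x d := by
  simp only [polar, add_comm x d]; ring

namespace IsQuadratic

variable {q : G → ZMod 2}

lemma polar_add_right (hq : IsQuadratic q) (d x y : G) :
    polar q d (x + y) = polar q d x + polar q d y := by
  have h := hq x y d
  simp only [polar, add_right_comm x y d, add_comm y d] at h ⊢
  grind

lemma polar_add_left (hq : IsQuadratic q) (d e x : G) :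
    polar q (d + e) x = polar q d x + polar q e x := by
  simp only [polar_comm q _ x, hq.polar_add_right]

def polarHom (hq : IsQuadratic q) : G →+ G →+ ZMod 2 :=
  AddMonoidHom.mk' (fun d => AddMonoidHom.mk' (polar q d) (hq.polar_add_right d))
    fun d e => by ext x; exact hq.polar_add_left d e x

lemma polarHom_apply (hq : IsQuadratic q) (d x : G) : hq.polarHom d x = polar q d x := rfl

def affineOnRadical (hq : IsQuadratic q) : hq.polarHom.ker →+ ZMod 2 :=
  AddMonoidHom.mk' (fun d => q d + q 0) fun d e => by
    have hde : polar q d e = 0 := by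
      rw [← polarHom_apply hq, AddMonoidHom.mem_ker.mp d.2, AddMonoidHom.zero_apply]
    simp only [polar, AddSubgroup.coe_add, add_comm (e : G)] at hde ⊢
    grind

variable [Fintype G]

open Classical in
lemma sum_chi_mul_self (hq : IsQuadratic q) :
    (∑ x, chi (q x)) * ∑ x, chi (q x) =
      Fintype.card G * ∑ d : hq.polarHom.ker, chi (hq.affineOnRadical d) := by
  have hsplit (x d : G) : chi (q x) * chi (q (x + d)) = chi (polar q d x) * chi (q d + q 0) := by
    simp only [← AddChar.map_add_eq_mul, polar]
    congr 1
    grind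
  calc (∑ x, chi (q x)) * ∑ x, chi (q x)
      = ∑ x, ∑ d, chi (q x) * chi (q (x + d)) := by
        rw [Finset.sum_mul_sum]
        exact Finset.sum_congr rfl fun x _ =>
          (Fintype.sum_equiv (Equiv.addLeft x) _ _ fun _ => rfl).symm
    _ = ∑ d, (∑ x, chi (hq.polarHom d x)) * chi (q d + q 0) := by
        simp only [hsplit, Finset.sum_mul, polarHom_apply]
        exact Finset.sum_comm
    _ = Fintype.card G * ∑ d with hq.polarHom d = 0, chi (q d + q 0) := by
        simp only [sum_chi_addMonoidHom, ite_mul, zero_mul, Finset.sum_ite,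
          Finset.sum_const_zero, add_zero, ← Finset.mul_sum]
    _ = Fintype.card G * ∑ d : hq.polarHom.ker, chi (hq.affineOnRadical d) := by
        rw [Finset.sum_subtype (p := (· ∈ hq.polarHom.ker)) _ (by simp [AddMonoidHom.mem_ker])]
        rfl

lemma sq_sum_chi (hq : IsQuadratic q) :
    (∑ x, chi (q x)) ^ 2 = 0 ∨
      (∑ x, chi (q x)) ^ 2 = Fintype.card G * Nat.card hq.polarHom.ker := by
  classical
  rw [sq, sum_chi_mul_self hq, sum_chi_addMonoidHom, Nat.card_eq_fintype_card]
  split_ifs <;> simp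

end IsQuadratic

end Quadratic

section Cube

variable {m : ℕ}

lemma card_cube : Fintype.card (Fin m → ZMod 2) = 2 ^ m := by
  simp

lemma signedBias_eq_sum_chi (q : (Fin m → ZMod 2) → ZMod 2) :
    signedBias q = ((∑ x, chi (q x) : ℤ) : ℝ) / 2 ^ m := by
  simp [signedBias, chi_apply, apply_ite (Int.cast : ℤ → ℝ)]

lemma natAbs_eq_two_pow_of_sq_eq {n : ℤ} {k : ℕ} (h : n ^ 2 = 2 ^ k) :
    ∃ e, n.natAbs = 2 ^ e := by
  have hdvd : n.natAbs ∣ 2 ^ k :=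
    ⟨n.natAbs, by rw [← sq]; exact_mod_cast ((Int.natAbs_sq n).trans h).symm⟩
  obtain ⟨e, -, he⟩ := (Nat.dvd_prime_pow Nat.prime_two).mp hdvd
  exact ⟨e, he⟩

lemma card_ker_polarHom_eq_two_pow {q : (Fin m → ZMod 2) → ZMod 2} (hq : IsQuadratic q) :
    ∃ w, Nat.card hq.polarHom.ker = 2 ^ w := by
  have := AddSubgroup.card_addSubgroup_dvd_card hq.polarHom.ker
  rw [Nat.card_eq_fintype_card (α := Fin m → ZMod 2), card_cube] at this
  obtain ⟨w, -, hw⟩ := (Nat.dvd_prime_pow Nat.prime_two).mp this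
  exact ⟨w, hw⟩

lemma IsQuadratic.signedBias_eq {q : (Fin m → ZMod 2) → ZMod 2} (hq : IsQuadratic q) :
    ∃ (ε : ℤ) (h : ℕ), |ε| ≤ 1 ∧ signedBias q = ε / 2 ^ h := by
  have hS := abs_sum_chi_le q
  obtain ⟨w, hw⟩ := card_ker_polarHom_eq_two_pow hq
  rw [signedBias_eq_sum_chi]
  rcases hq.sq_sum_chi with h0 | hsq
  · refine ⟨0, 0, by simp, ?_⟩
    rw [pow_eq_zero_iff two_ne_zero |>.mp h0]
    simp
  rw [card_cube, hw] at hsq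
  rw [card_cube, Int.abs_eq_natAbs] at hS
  generalize ∑ x, chi (q x) = S at *
  obtain ⟨e, he⟩ :=
    natAbs_eq_two_pow_of_sq_eq (k := m + w) (by rw [hsq, pow_add]; push_cast; ring)
  have hem : e ≤ m := (Nat.pow_le_pow_iff_right one_lt_two).mp (by rw [← he]; exact_mod_cast hS)
  refine ⟨S.sign, m - e, by rcases Int.sign_trichotomy S with h | h | h <;> simp [h], ?_⟩
  have hSe : S = S.sign * 2 ^ e := by
    rw [← Nat.cast_ofNat, ← Nat.cast_pow, ← he, Int.sign_mul_natAbs]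
  conv_lhs => rw [hSe, ← Nat.sub_add_cancel hem, pow_add]
  push_cast
  field_simp

end Cube

section Polynomials

variable {G : Type*} [AddCommGroup G]

lemma isQuadratic_const (c : ZMod 2) : IsQuadratic fun _ : G => c := fun _ _ _ => rfl

lemma IsQuadratic.const_mul {q : G → ZMod 2} (hq : IsQuadratic q) (c : ZMod 2) :
    IsQuadratic fun x => c * q x := fun x d e => by
  linear_combination c * hq x d e

lemma isQuadratic_sum {ι : Type*} (s : Finset ι) {q : ι → G → ZMod 2}
    (hq : ∀ i ∈ s, IsQuadratic (q i)) : IsQuadratic fun x => ∑ i ∈ s, q i x := by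
  classical
  induction s using Finset.induction_on with
  | empty => simpa using isQuadratic_const 0
  | insert j s hj ih =>
    intro x d e
    simp only [Finset.sum_insert hj]
    linear_combination hq j (s.mem_insert_self j) x d e +
      ih (fun i hi => hq i (Finset.mem_insert_of_mem hi)) x d e

variable {m : ℕ}

lemma zmod_two_pow_eq_self (a : ZMod 2) {n : ℕ} (hn : n ≠ 0) : a ^ n = a := by
  rcases (by decide : ∀ b : ZMod 2, b = 0 ∨ b = 1) a with rfl | rfl <;> simp [hn]

lemma isQuadratic_apply_mul_apply (i j : Fin m) :
    IsQuadratic fun x : Fin m → ZMod 2 => x i * x j := by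
  intro x d e
  simp only [Pi.add_apply, Pi.zero_apply]
  grind

lemma isQuadratic_prod_apply {S : Finset (Fin m)} (hS : S.card ≤ 2) :
    IsQuadratic fun x : Fin m → ZMod 2 => ∏ i ∈ S, x i := by
  obtain h | h | h : S.card = 0 ∨ S.card = 1 ∨ S.card = 2 := by omega
  · simpa [Finset.card_eq_zero.mp h] using isQuadratic_const 1
  · obtain ⟨i, rfl⟩ := Finset.card_eq_one.mp h
    simpa [← sq, zmod_two_pow_eq_self _ two_ne_zero] using isQuadratic_apply_mul_apply i i
  · obtain ⟨i, j, hij, rfl⟩ := Finset.card_eq_two.mp h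
    simpa [Finset.prod_pair hij] using isQuadratic_apply_mul_apply i j

lemma isQuadratic_eval {p : MvPolynomial (Fin m) (ZMod 2)} (hp : p.totalDegree ≤ 2) :
    IsQuadratic fun x => MvPolynomial.eval x p := by
  simp only [MvPolynomial.eval_eq]
  refine isQuadratic_sum _ fun k hk => ?_
  have hcard : k.support.card ≤ 2 := calc
    k.support.card = ∑ i ∈ k.support, 1 := Finset.card_eq_sum_ones _
    _ ≤ k.sum fun _ e => e := Finset.sum_le_sum fun i hi => Nat.one_le_iff_ne_zero.mpr <|
      Finsupp.mem_support_iff.mp hi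
    _ ≤ 2 := (MvPolynomial.le_totalDegree hk).trans hp
  have hpow (x : Fin m → ZMod 2) : ∏ i ∈ k.support, x i ^ k i = ∏ i ∈ k.support, x i :=
    Finset.prod_congr rfl fun i hi => zmod_two_pow_eq_self _ (Finsupp.mem_support_iff.mp hi)
  simpa only [hpow] using (isQuadratic_prod_apply hcard).const_mul (p.coeff k)

end Polynomials

section Walsh

variable {r : ℕ}

open Matrix

/-- The Walsh–Fourier coefficient of `(-1)^Γ` at `a`, scaled by `2^r`. -/
def walsh (Γ : (Fin r → ZMod 2) → ZMod 2) (a : Fin r → ZMod 2) : ℤ :=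
  ∑ z, chi (Γ z + a ⬝ᵥ z)

lemma abs_walsh_le (Γ : (Fin r → ZMod 2) → ZMod 2) (a : Fin r → ZMod 2) :
    |walsh Γ a| ≤ 2 ^ r := by
  simpa [walsh, card_cube] using abs_sum_chi_le fun z => Γ z + a ⬝ᵥ z

lemma sum_chi_dotProduct (u : Fin r → ZMod 2) :
    ∑ a : Fin r → ZMod 2, chi (a ⬝ᵥ u) = if u = 0 then 2 ^ r else 0 := by
  classical
  let f : (Fin r → ZMod 2) →+ ZMod 2 := AddMonoidHom.mk' (· ⬝ᵥ u) fun a b => add_dotProduct a b u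
  have hf : f = 0 ↔ u = 0 := by
    simp [f, DFunLike.ext_iff, dotProduct_comm _ u, dotProduct_eq_zero_iff]
  simpa [f, hf, card_cube] using sum_chi_addMonoidHom f

lemma sum_walsh_mul_chi (Γ : (Fin r → ZMod 2) → ZMod 2) (y : Fin r → ZMod 2) :
    ∑ a, walsh Γ a * chi (a ⬝ᵥ y) = 2 ^ r * chi (Γ y) := by
  have hzy (z : Fin r → ZMod 2) : z + y = 0 ↔ z = y := by
    rw [add_eq_zero_iff_eq_neg, show -y = y from funext fun i => ZMod.neg_eq_self_mod_two (y i)]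
  calc ∑ a, walsh Γ a * chi (a ⬝ᵥ y)
      = ∑ z, chi (Γ z) * ∑ a : Fin r → ZMod 2, chi (a ⬝ᵥ (z + y)) := by
        simp only [walsh, Finset.sum_mul, Finset.mul_sum, ← AddChar.map_add_eq_mul,
          dotProduct_add, add_assoc]
        exact Finset.sum_comm
    _ = 2 ^ r * chi (Γ y) := by
        simp only [sum_chi_dotProduct, hzy, mul_ite, mul_zero]
        simp [mul_comm]

lemma two_pow_mul_sum_chi_comp {X : Type*} [Fintype X] (Γ : (Fin r → ZMod 2) → ZMod 2)
    (Y : X → Fin r → ZMod 2) :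
    2 ^ r * ∑ x, chi (Γ (Y x)) = ∑ a, walsh Γ a * ∑ x, chi (a ⬝ᵥ Y x) := by
  simp only [Finset.mul_sum, ← sum_walsh_mul_chi]
  exact Finset.sum_comm

end Walsh

section DyadicApproximation

variable {ι : Type*}

lemma one_add_sum_le_prod_one_add (s : Finset ι) {f : ι → ℝ} (hf : ∀ i ∈ s, 0 ≤ f i) :
    1 + ∑ i ∈ s, f i ≤ ∏ i ∈ s, (1 + f i) := by
  classical
  induction s using Finset.induction_on with
  | empty => simp
  | insert j s hj ih =>
    rw [Finset.sum_insert hj, Finset.prod_insert hj]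
    have hfj := hf j (s.mem_insert_self j)
    have hs := ih fun i hi => hf i (Finset.mem_insert_of_mem hi)
    have hsum : 0 ≤ ∑ i ∈ s, f i :=
      Finset.sum_nonneg fun i hi => hf i (Finset.mem_insert_of_mem hi)
    nlinarith

variable (s : Finset ι) (h : ι → ℕ) (w : ι → ℝ)

noncomputable def tailSum (c : ℕ) : ℝ := ∑ i ∈ s with c < h i, w i / 2 ^ h i

lemma tailSum_eq_tailSum_succ_add (c : ℕ) :
    tailSum s h w c = tailSum s h w (c + 1) + (∑ i ∈ s with h i = c + 1, w i) / 2 ^ (c + 1) := by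
  simp only [tailSum, Finset.sum_filter, Finset.sum_div, ← Finset.sum_add_distrib]
  refine Finset.sum_congr rfl fun i _ => ?_
  by_cases hlt : c + 1 < h i
  · simp [hlt, show c < h i by omega, show h i ≠ c + 1 by omega]
  · by_cases heq : h i = c + 1
    · simp [heq]
    · simp [hlt, heq, show ¬c < h i by omega]

lemma prod_one_add_sum_fiber_le (hw : ∀ i ∈ s, 0 ≤ w i) (n : ℕ) :
    ∏ c ∈ Finset.Ioc 0 n, (1 + ∑ i ∈ s with h i = c, w i) ≤ ∏ i ∈ s with 0 < h i, (1 + w i) :=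
  calc ∏ c ∈ Finset.Ioc 0 n, (1 + ∑ i ∈ s with h i = c, w i)
      ≤ ∏ c ∈ Finset.Ioc 0 n, ∏ i ∈ s with h i = c, (1 + w i) :=
        Finset.prod_le_prod
          (fun c _ => add_nonneg zero_le_one <| Finset.sum_nonneg fun i hi =>
            hw i (Finset.mem_filter.mp hi).1)
          fun c _ => one_add_sum_le_prod_one_add _ fun i hi => hw i (Finset.mem_filter.mp hi).1
    _ = ∏ i ∈ s with h i ∈ Finset.Ioc 0 n, (1 + w i) :=
        Finset.prod_fiberwise_eq_prod_filter _ _ _ _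
    _ ≤ ∏ i ∈ s with 0 < h i, (1 + w i) := by
        apply Finset.prod_le_prod_of_subset_of_one_le
        · exact Finset.monotone_filter_right _ fun i _ hi => (Finset.mem_Ioc.mp hi).1
        · exact fun i hi => by linarith [hw i (Finset.mem_filter.mp hi).1]
        · exact fun i hi _ => by linarith [hw i (Finset.mem_filter.mp hi).1]

/-- Take the least `c` with `2ᶜ · tailSum c ≤ 1`. Before it, each step from `c` to `c + 1`
doubles the potential `max (2ᶜ · tailSum c) 1` at the cost of a factor `1 + ∑_{h i = c + 1} w i`. -/
theorem exists_two_pow_le_prod_and_tailSum_le (hw : ∀ i ∈ s, 0 ≤ w i) :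
    ∃ c, (2 : ℝ) ^ c ≤ ∏ i ∈ s with 0 < h i, (1 + w i) ∧ 2 ^ c * tailSum s h w c ≤ 1 := by
  classical
  set u : ℕ → ℝ := fun c => 2 ^ c * tailSum s h w c
  set M : ℕ → ℝ := fun c => ∑ i ∈ s with h i = c, w i
  have hM (c : ℕ) : 0 ≤ M c := Finset.sum_nonneg fun i hi => hw i (Finset.mem_filter.mp hi).1
  have hu (c : ℕ) : 2 * u c = u (c + 1) + M (c + 1) := by
    simp only [u, M, tailSum_eq_tailSum_succ_add s h w c]
    field_simp
    ring
  have hex : ∃ c, u c ≤ 1 := ⟨s.sup h, by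
    simp only [u]
    rw [show tailSum s h w (s.sup h) = 0 from Finset.sum_eq_zero fun i hi =>
      absurd (Finset.le_sup (Finset.mem_filter.mp hi).1) (not_le.mpr (Finset.mem_filter.mp hi).2)]
    simp⟩
  have hgrow (k : ℕ) (hk : k ≤ Nat.find hex) :
      (2 : ℝ) ^ k ≤ max (u k) 1 * ∏ c ∈ Finset.Ioc 0 k, (1 + M c) := by
    induction k with
    | zero => simp
    | succ k ih =>
      have hbad : 1 < u k := not_le.mp (Nat.find_min hex (by omega))
      have hprod : 0 ≤ ∏ c ∈ Finset.Ioc 0 k, (1 + M c) :=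
        Finset.prod_nonneg fun c _ => by linarith [hM c]
      rw [Finset.prod_Ioc_succ_top (Nat.zero_le k), pow_succ]
      calc (2 : ℝ) ^ k * 2 ≤ max (u k) 1 * (∏ c ∈ Finset.Ioc 0 k, (1 + M c)) * 2 := by
            gcongr; exact ih (by omega)
        _ = (u (k + 1) + M (k + 1)) * ∏ c ∈ Finset.Ioc 0 k, (1 + M c) := by
            rw [max_eq_left hbad.le, ← hu]; ring
        _ ≤ (max (u (k + 1)) 1 * (1 + M (k + 1))) * ∏ c ∈ Finset.Ioc 0 k, (1 + M c) := by
            gcongr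
            nlinarith [le_max_left (u (k + 1)) 1, le_max_right (u (k + 1)) 1, hM (k + 1)]
        _ = _ := by ring
  refine ⟨Nat.find hex, ?_, Nat.find_spec hex⟩
  calc (2 : ℝ) ^ Nat.find hex ≤ ∏ c ∈ Finset.Ioc 0 (Nat.find hex), (1 + M c) := by
        simpa [max_eq_right (Nat.find_spec hex)] using hgrow _ le_rfl
    _ ≤ ∏ i ∈ s with 0 < h i, (1 + w i) := prod_one_add_sum_fiber_le s h w hw _

theorem exists_abs_sum_sub_div_two_pow_le (n : ι → ℤ) (t : ℕ) :
    ∃ (c : ℕ) (A : ℤ), (2 : ℝ) ^ c ≤ ∏ i ∈ s with 0 < h i, (1 + 2 ^ t * |(n i : ℝ)|) ∧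
      |∑ i ∈ s, (n i : ℝ) / 2 ^ h i - A / 2 ^ c| ≤ ((2 : ℝ) ^ t)⁻¹ * ((2 : ℝ) ^ c)⁻¹ := by
  obtain ⟨c, hc, htail⟩ := exists_two_pow_le_prod_and_tailSum_le s h
    (fun i => 2 ^ t * |(n i : ℝ)|) fun _ _ => by positivity
  refine ⟨c, ∑ i ∈ s with h i ≤ c, n i * 2 ^ (c - h i), hc, ?_⟩
  have hhead : ((∑ i ∈ s with h i ≤ c, n i * 2 ^ (c - h i) : ℤ) : ℝ) / 2 ^ c =
      ∑ i ∈ s with h i ≤ c, (n i : ℝ) / 2 ^ h i := by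
    push_cast
    rw [Finset.sum_div]
    refine Finset.sum_congr rfl fun i hi => ?_
    rw [← Nat.sub_add_cancel (Finset.mem_filter.mp hi).2, pow_add, Nat.add_sub_cancel]
    field_simp
  rw [hhead, ← Finset.sum_filter_add_sum_filter_not s (fun i => h i ≤ c), add_sub_cancel_left]
  calc |∑ i ∈ s with ¬h i ≤ c, (n i : ℝ) / 2 ^ h i|
      ≤ ∑ i ∈ s with ¬h i ≤ c, |(n i : ℝ)| / 2 ^ h i := by
        simpa only [abs_div, abs_pow, abs_two] using
          Finset.abs_sum_le_sum_abs (fun i => (n i : ℝ) / 2 ^ h i) _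
    _ = ((2 : ℝ) ^ t)⁻¹ * tailSum s h (fun i => 2 ^ t * |(n i : ℝ)|) c := by
        simp only [tailSum, not_le, Finset.mul_sum]
        refine Finset.sum_congr rfl fun i _ => ?_
        field_simp
    _ ≤ ((2 : ℝ) ^ t)⁻¹ * ((2 : ℝ) ^ c)⁻¹ := by
        gcongr
        rw [inv_eq_one_div, le_div_iff₀ (by positivity), mul_comm]
        exact htail

end DyadicApproximation

section Numerics

lemma one_add_pow_le_two {x : ℝ} {k : ℕ} (hx : 0 ≤ x) (hkx : k * x ≤ 1 / 2) : (1 + x) ^ k ≤ 2 :=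
  calc (1 + x) ^ k ≤ Real.exp x ^ k := by
        gcongr
        linarith [Real.add_one_le_exp x]
    _ = Real.exp (k * x) := (Real.exp_nat_mul x k).symm
    _ ≤ Real.exp (Real.log 2) := by
        gcongr
        linarith [Real.log_two_gt_d9]
    _ = 2 := Real.exp_log two_pos

lemma one_add_two_pow_pow_le {r t k : ℕ} (ht : 0 < t) (hk : k < 2 ^ r) :
    (1 + 2 ^ (t + r) : ℝ) ^ k ≤ 2 ^ ((r + t) * 2 ^ r) := by
  have hsmall : (1 + ((2 : ℝ) ^ (t + r))⁻¹) ^ k ≤ 2 := by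
    refine one_add_pow_le_two (by positivity) ?_
    have hk' : (k : ℝ) ≤ 2 ^ r := by exact_mod_cast hk.le
    have ht' : (2 : ℝ) ≤ 2 ^ t := by simpa using pow_le_pow_right₀ one_le_two ht
    calc (k : ℝ) * ((2 : ℝ) ^ (t + r))⁻¹ ≤ 2 ^ r * ((2 : ℝ) ^ (t + r))⁻¹ := by gcongr
      _ = ((2 : ℝ) ^ t)⁻¹ := by rw [pow_add]; field_simp
      _ ≤ 1 / 2 := by rw [one_div]; gcongr
  have hexp : (t + r) * k + 1 ≤ (r + t) * 2 ^ r := by nlinarith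
  calc (1 + 2 ^ (t + r) : ℝ) ^ k = (2 : ℝ) ^ ((t + r) * k) * (1 + ((2 : ℝ) ^ (t + r))⁻¹) ^ k := by
        rw [pow_mul, ← mul_pow, mul_add, mul_inv_cancel₀ (by positivity), mul_one, add_comm]
    _ ≤ 2 ^ ((t + r) * k) * 2 := by gcongr
    _ = 2 ^ ((t + r) * k + 1) := (pow_succ _ _).symm
    _ ≤ 2 ^ ((r + t) * 2 ^ r) := pow_le_pow_right₀ one_le_two hexp

lemma prod_one_add_two_pow_mul_abs_le {ι : Type*} {s : Finset ι} {n : ι → ℤ} {r t : ℕ}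
    (ht : 0 < t) (hn : ∀ i ∈ s, |n i| ≤ 2 ^ r) (hs : s.card < 2 ^ r) :
    ∏ i ∈ s, (1 + 2 ^ t * |(n i : ℝ)|) ≤ 2 ^ ((r + t) * 2 ^ r) :=
  calc ∏ i ∈ s, (1 + 2 ^ t * |(n i : ℝ)|)
      ≤ ∏ _i ∈ s, (1 + 2 ^ (t + r) : ℝ) := by
        gcongr with i hi
        rw [pow_add]
        gcongr
        exact_mod_cast hn i hi
    _ ≤ 2 ^ ((r + t) * 2 ^ r) := by
        rw [Finset.prod_const]
        exact one_add_two_pow_pow_le ht hs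

end Numerics

section RankTwo

open Matrix

variable {m r : ℕ}

lemma DegLE.isQuadratic {q : (Fin m → ZMod 2) → ZMod 2} (hq : DegLE 2 q) : IsQuadratic q := by
  obtain ⟨p, hp, hpq⟩ := hq
  simpa only [hpq] using isQuadratic_eval hp

lemma isQuadratic_dotProduct {Q : Fin r → (Fin m → ZMod 2) → ZMod 2}
    (hQ : ∀ j, IsQuadratic (Q j)) (a : Fin r → ZMod 2) :
    IsQuadratic fun x => a ⬝ᵥ fun j => Q j x :=
  isQuadratic_sum _ fun j _ => (hQ j).const_mul (a j)

lemma signedBias_comp (Γ : (Fin r → ZMod 2) → ZMod 2) (Q : Fin r → (Fin m → ZMod 2) → ZMod 2) :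
    signedBias (fun x => Γ fun j => Q j x) =
      ((2 : ℝ) ^ r)⁻¹ * ∑ a, walsh Γ a * signedBias fun x => a ⬝ᵥ fun j => Q j x := by
  have key := congrArg (Int.cast : ℤ → ℝ) (two_pow_mul_sum_chi_comp Γ fun x j => Q j x)
  push_cast at key
  simp only [signedBias_eq_sum_chi, mul_div_assoc', ← Finset.sum_div]
  field_simp
  push_cast
  linear_combination key

lemma signedBias_const_zero : signedBias (fun _ : Fin m → ZMod 2 => (0 : ZMod 2)) = 1 := by
  simp [signedBias]

lemma eq_zero_of_intCast_div_two_pow_eq_one {ε : ℤ} {h : ℕ} (hε : |ε| ≤ 1)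
    (he : (ε : ℝ) / 2 ^ h = 1) : h = 0 := by
  have hε' : (ε : ℝ) ≤ 1 := by exact_mod_cast (le_abs_self ε).trans hε
  rw [div_eq_one_iff_eq (by positivity)] at he
  by_contra hh
  linarith [one_lt_pow₀ (one_lt_two (α := ℝ)) hh]

theorem RankLE.exists_signedBias_eq_sum {P : (Fin m → ZMod 2) → ZMod 2} (hP : RankLE 2 r P) :
    ∃ (n : (Fin r → ZMod 2) → ℤ) (h : (Fin r → ZMod 2) → ℕ), (∀ a, |n a| ≤ 2 ^ r) ∧ h 0 = 0 ∧
      signedBias P = ((2 : ℝ) ^ r)⁻¹ * ∑ a, (n a : ℝ) / 2 ^ h a := by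
  obtain ⟨Q, Γ, hQ, hPQ⟩ := hP
  choose ε h hε hbias using fun a =>
    (isQuadratic_dotProduct (fun j => DegLE.isQuadratic (hQ j)) a).signedBias_eq
  refine ⟨fun a => walsh Γ a * ε a, h, fun a => ?_, ?_, ?_⟩
  · rw [abs_mul]
    nlinarith [abs_walsh_le Γ a, hε a, abs_nonneg (walsh Γ a), abs_nonneg (ε a)]
  · refine eq_zero_of_intCast_div_two_pow_eq_one (hε 0) ?_
    rw [← hbias 0]
    simpa using signedBias_const_zero
  · rw [show P = fun x => Γ fun j => Q j x from funext hPQ, signedBias_comp]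
    simp only [hbias, Int.cast_mul, mul_div_assoc]

end RankTwo

end QuadraticRankBias

open QuadraticRankBias in
/-- the signed bias of a function of quadratic rank at most `r`
is close to a dyadic number of bounded granularity. -/
theorem rank2_bias_near_dyadic :
    ∀ m r : ℕ, ∀ P : (Fin m → ZMod 2) → ZMod 2, RankLE 2 r P →
      ∀ t : ℕ, 0 < t →
        ∃ s : ℕ, s ≤ (r + t) * 2 ^ r + r ∧
          ∃ A : ℤ, |signedBias P - (A:ℝ) / 2 ^ s| ≤ ((2:ℝ) ^ t)⁻¹ * ((2:ℝ) ^ s)⁻¹ := by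
  intro m r P hP t ht
  obtain ⟨n, h, hn, h0, hbias⟩ := hP.exists_signedBias_eq_sum
  obtain ⟨c, A, hc, hA⟩ := exists_abs_sum_sub_div_two_pow_le Finset.univ h n t
  have hcard : (Finset.univ.filter fun a => 0 < h a).card < 2 ^ r := by
    simpa [card_cube] using Finset.card_lt_card (Finset.filter_ssubset.mpr
      ⟨0, Finset.mem_univ (0 : Fin r → ZMod 2), by simp [h0]⟩)
  have hcr : (2 : ℝ) ^ c ≤ 2 ^ ((r + t) * 2 ^ r) :=
    hc.trans (prod_one_add_two_pow_mul_abs_le ht (fun a _ => hn a) hcard)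
  refine ⟨r + c, by linarith [(pow_le_pow_iff_right₀ one_lt_two).mp hcr], A, ?_⟩
  have hsplit : signedBias P - A / 2 ^ (r + c) =
      ((2 : ℝ) ^ r)⁻¹ * (∑ a, (n a : ℝ) / 2 ^ h a - A / 2 ^ c) := by
    rw [hbias, pow_add]
    field_simp
  calc |signedBias P - A / 2 ^ (r + c)|
      = ((2 : ℝ) ^ r)⁻¹ * |∑ a, (n a : ℝ) / 2 ^ h a - A / 2 ^ c| := by
        rw [hsplit, abs_mul, abs_inv, abs_pow, abs_two]
    _ ≤ ((2 : ℝ) ^ r)⁻¹ * (((2 : ℝ) ^ t)⁻¹ * ((2 : ℝ) ^ c)⁻¹) := by gcongr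
    _ = ((2 : ℝ) ^ t)⁻¹ * ((2 : ℝ) ^ (r + c))⁻¹ := by rw [pow_add, mul_inv]; ring
end

section
/- Let D, T₁,…,T_k be probability distributions on a finite set X, let c₁,…,c_k > 0 with ∑_{i=1}^k c_i = 1, and let T = ∑_{i=1}^k c_i·T_i be their convex combination. Suppose that for each i, ‖D − T_i‖_TV = 1 − ε_i for some ε_i ∈ [0, 1/2]. Then ‖D − T‖_TV ≥ 1 − ∑_{i=1}^k (1 + c_i)·ε_i. -/
open Finset

/-! Total variation distance is witnessed by sets: `tvDist D (T i) = 1 - ε i` is attained on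
`Aᵢ = {D < Tᵢ}`, so `D(Aᵢ) ≤ ε i` and `Tᵢ(Aᵢ) ≥ 1 - ε i`. On the union `B` of the `Aᵢ` the union
bound gives `D(B) ≤ ∑ ε i`, while `T(B) ≥ ∑ c i (1 - ε i)`, and `T(B) - D(B) ≤ tvDist D T`. -/

theorem Finset.sum_biUnion_le_of_nonneg {ι X M : Type*} [DecidableEq X] [AddCommMonoid M]
    [PartialOrder M] [IsOrderedAddMonoid M] {f : X → M} (hf : ∀ x, 0 ≤ f x) (s : Finset ι)
    (A : ι → Finset X) :
    ∑ x ∈ s.biUnion A, f x ≤ ∑ i ∈ s, ∑ x ∈ A i, f x := by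
  classical
  induction s using Finset.induction_on with
  | empty => simp
  | insert i s hi ih =>
    rw [biUnion_insert, sum_insert hi]
    calc ∑ x ∈ A i ∪ s.biUnion A, f x
        ≤ ∑ x ∈ A i ∪ s.biUnion A, f x + ∑ x ∈ A i ∩ s.biUnion A, f x :=
          le_add_of_nonneg_right (sum_nonneg fun x _ => hf x)
      _ = ∑ x ∈ A i, f x + ∑ x ∈ s.biUnion A, f x := sum_union_inter
      _ ≤ ∑ x ∈ A i, f x + ∑ j ∈ s, ∑ x ∈ A j, f x := by gcongr

section tvDist

variable {β : Type*} [Fintype β] {μ ν : β → ℝ}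

theorem tvDist_eq_sum_max_sub_zero (h : ∑ y, μ y = ∑ y, ν y) :
    tvDist μ ν = ∑ y, max (ν y - μ y) 0 := by
  have habs : ∀ y, |μ y - ν y| = 2 * max (ν y - μ y) 0 - (ν y - μ y) := fun y => by
    rw [abs_sub_comm, ← max_zero_add_max_neg_zero_eq_abs_self, neg_sub, max_def, max_def]
    split_ifs <;> linarith
  simp only [tvDist, habs, sum_sub_distrib, ← mul_sum, h, sub_self]
  ring

theorem sum_sub_le_tvDist (h : ∑ y, μ y = ∑ y, ν y) (A : Finset β) :
    ∑ y ∈ A, (ν y - μ y) ≤ tvDist μ ν := by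
  rw [tvDist_eq_sum_max_sub_zero h]
  calc ∑ y ∈ A, (ν y - μ y) ≤ ∑ y ∈ A, max (ν y - μ y) 0 := sum_le_sum fun y _ => le_max_left _ _
    _ ≤ ∑ y, max (ν y - μ y) 0 :=
      sum_le_sum_of_subset_of_nonneg (subset_univ A) fun y _ _ => le_max_right _ _

theorem tvDist_eq_sum_filter_lt (h : ∑ y, μ y = ∑ y, ν y) :
    tvDist μ ν = ∑ y with μ y < ν y, (ν y - μ y) := by
  rw [tvDist_eq_sum_max_sub_zero h, sum_filter]
  refine sum_congr rfl fun y _ => ?_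
  split_ifs with hlt
  · exact max_eq_left (sub_pos.2 hlt).le
  · exact max_eq_right (sub_nonpos.2 (not_lt.1 hlt))

theorem exists_finset_of_le_tvDist (hμ0 : ∀ y, 0 ≤ μ y) (hμ1 : ∑ y, μ y = 1)
    (hν0 : ∀ y, 0 ≤ ν y) (hν1 : ∑ y, ν y = 1) {ε : ℝ} (hε : 1 - ε ≤ tvDist μ ν) :
    ∃ A : Finset β, ∑ y ∈ A, μ y ≤ ε ∧ 1 - ε ≤ ∑ y ∈ A, ν y := by
  set A : Finset β := {y | μ y < ν y}
  have hgap : 1 - ε ≤ ∑ y ∈ A, ν y - ∑ y ∈ A, μ y := by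
    rwa [← sum_sub_distrib, ← tvDist_eq_sum_filter_lt (hμ1.trans hν1.symm)]
  have hνA : ∑ y ∈ A, ν y ≤ 1 :=
    hν1 ▸ sum_le_sum_of_subset_of_nonneg (subset_univ A) fun y _ _ => hν0 y
  have hμA : 0 ≤ ∑ y ∈ A, μ y := sum_nonneg fun y _ => hμ0 y
  exact ⟨A, by linarith, by linarith⟩

end tvDist

theorem tv_dist_from_convex_combination_general {X : Type*} [Fintype X] (k : ℕ)
    (D : X → ℝ) (T : Fin k → X → ℝ) (c : Fin k → ℝ) (ε : Fin k → ℝ)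
    (hD0 : ∀ x, 0 ≤ D x) (hD1 : ∑ x, D x = 1)
    (hT0 : ∀ i x, 0 ≤ T i x) (hT1 : ∀ i, ∑ x, T i x = 1)
    (hc : ∀ i, 0 < c i) (hcsum : ∑ i, c i = 1)
    (htv : ∀ i, tvDist D (T i) = 1 - ε i) :
    tvDist D (fun x => ∑ i, c i * T i x) ≥ 1 - ∑ i, (1 + c i) * ε i := by
  classical
  choose A hDA hTA using fun i => exists_finset_of_le_tvDist hD0 hD1 (hT0 i) (hT1 i) (htv i).ge
  set B := univ.biUnion A
  have hDB : ∑ x ∈ B, D x ≤ ∑ i, ε i :=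
    (sum_biUnion_le_of_nonneg hD0 univ A).trans (sum_le_sum fun i _ => hDA i)
  have hTB (i : Fin k) : 1 - ε i ≤ ∑ x ∈ B, T i x :=
    (hTA i).trans <| sum_le_sum_of_subset_of_nonneg (subset_biUnion_of_mem A (mem_univ i))
      fun x _ _ => hT0 i x
  have hmass : ∑ x, D x = ∑ x, ∑ i, c i * T i x := by
    simp only [hD1, sum_comm (s := univ (α := X)), ← mul_sum, hT1, mul_one, hcsum]
  calc 1 - ∑ i, (1 + c i) * ε i = ∑ i, c i * (1 - ε i) - ∑ i, ε i := by
        simp only [mul_sub, add_mul, one_mul, mul_one, sum_add_distrib, sum_sub_distrib, hcsum]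
        ring
    _ ≤ ∑ i, c i * ∑ x ∈ B, T i x - ∑ x ∈ B, D x := by
        gcongr with i
        · exact (hc i).le
        · exact hTB i
    _ = ∑ x ∈ B, ((∑ i, c i * T i x) - D x) := by
        simp only [sum_sub_distrib, mul_sum]
        rw [sum_comm]
    _ ≤ _ := sum_sub_le_tvDist hmass B

/-- distance from a convex combination of distributions. -/
theorem tv_dist_from_convex_combination {X : Type*} [Fintype X] (k : ℕ)
    (D : X → ℝ) (T : Fin k → X → ℝ) (c : Fin k → ℝ) (ε : Fin k → ℝ)
    (hD0 : ∀ x, 0 ≤ D x) (hD1 : ∑ x, D x = 1)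
    (hT0 : ∀ i x, 0 ≤ T i x) (hT1 : ∀ i, ∑ x, T i x = 1)
    (hc : ∀ i, 0 < c i) (hcsum : ∑ i, c i = 1)
    (hε0 : ∀ i, 0 ≤ ε i) (hε1 : ∀ i, ε i ≤ 1/2)
    (htv : ∀ i, tvDist D (T i) = 1 - ε i) :
    tvDist D (fun x => ∑ i, c i * T i x) ≥ 1 - ∑ i, (1 + c i) * ε i :=
  tv_dist_from_convex_combination_general k D T c ε hD0 hD1 hT0 hT1 hc hcsum htv
end

section
/- Fix a prime p and integers m > k ≥ 1 and s ≥ 1. Let S be a finite multiset of k-dimensional linear subspaces of 𝔽_p^m (the same subspace may appear with multiplicity) with |S| ≥ s^{k+1}·p^{(k²+k−2)/2}. Then S contains a sunflower of size at least s: a sub-multiset V₁,…,V_s (counted with multiplicity) such that, with C = V₁ ∩ ⋯ ∩ V_s, one has V_i ∩ V_j = C for all i ≠ j. -/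
open Finset

/-!
Induct on `k - dim C`, where `C` is a subspace contained in every member of the family. Take a
largest subfamily whose pairwise intersections are exactly `C`. If it has fewer than `s` members,
every member `V` of the family meets one of them in a subspace strictly larger than `C`, so `V`
contains at least `q^(c+1) - q^c` of the fewer than `s (q^k - q^c)` points outside `C` covered by
the subfamily (`c = dim C`). By double counting, some point `x ∉ C` lies in at least a fraction
`(q - 1) / (s (q^(k-c) - 1))` of the members; these all contain `C ⊔ span {x}`, of dimension `c + 1`,
and the bound `s^(j+1) q^((j²+j-2)/2)` for `j ≥ k - c` is large enough to survive this loss.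
-/

open Module

lemma Pairwise.inf_eq_iInf {α κ : Type*} [CompleteLattice α] {f : κ → α} {D : α}
    (h : Pairwise fun a b => f a ⊓ f b = D) {a b : κ} (hab : a ≠ b) :
    f a ⊓ f b = ⨅ l, f l := by
  refine le_antisymm (le_iInf fun l => ?_) (le_inf (iInf_le f a) (iInf_le f b))
  by_cases hla : l = a
  · exact hla ▸ inf_le_left
  · rw [h hab, ← h (Ne.symm hla)]
    exact inf_le_right

lemma Multiset.coe_ofFn_comp_le_map {ι β : Type*} {n : ℕ} {I : Finset ι} (V : ι → β)
    {e : Fin n → ι} (he : Function.Injective e) (heI : ∀ l, e l ∈ I) :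
    (↑(List.ofFn (V ∘ e)) : Multiset β) ≤ I.val.map V := by
  rw [Function.comp_def, List.ofFn_comp', ← Multiset.map_coe]
  have hnodup : (↑(List.ofFn e) : Multiset ι).Nodup := List.nodup_ofFn.mpr he
  refine Multiset.map_le_map ((Multiset.le_iff_subset hnodup).mpr fun x hx => ?_)
  obtain ⟨l, rfl⟩ := List.mem_ofFn.mp hx
  exact heI l

lemma Nat.sunflower_exponent_succ {j : ℕ} (hj : 1 ≤ j) :
    ((j + 1) ^ 2 + (j + 1) - 2) / 2 = (j ^ 2 + j - 2) / 2 + (j + 1) := by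
  have hsq : (j + 1) ^ 2 = j ^ 2 + 2 * j + 1 := by ring
  have hj2 : j ≤ j ^ 2 := Nat.le_self_pow two_ne_zero j
  omega

lemma Nat.pow_sub_pow_mul_le {q c k j : ℕ} (hq : 2 ≤ q) (hck : c < k) (hk : k ≤ c + j + 1) :
    (q ^ k - q ^ c) * q ^ ((j ^ 2 + j - 2) / 2) ≤
      q ^ (((j + 1) ^ 2 + (j + 1) - 2) / 2) * (q ^ (c + 1) - q ^ c) := by
  rcases j.eq_zero_or_pos with rfl | hj
  · obtain rfl : k = c + 1 := by omega
    simp [mul_comm]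
  have hqc : q ^ c ≤ q ^ (c + 1) - q ^ c := by
    have := Nat.mul_le_mul_left (q ^ c) hq
    rw [pow_succ]
    omega
  calc (q ^ k - q ^ c) * q ^ ((j ^ 2 + j - 2) / 2)
      ≤ q ^ (c + j + 1) * q ^ ((j ^ 2 + j - 2) / 2) := by
        gcongr
        exact (Nat.sub_le _ _).trans (Nat.pow_le_pow_right (by omega) hk)
    _ = q ^ ((j ^ 2 + j - 2) / 2 + (j + 1)) * q ^ c := by ring
    _ ≤ _ := by
        rw [Nat.sunflower_exponent_succ hj]
        gcongr

lemma Nat.pow_mul_pow_le_of_mul_le {q c k j s t N M : ℕ} (hq : 2 ≤ q) (hck : c < k)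
    (hk : k ≤ c + j + 1) (hts : t < s)
    (hN : s ^ (j + 2) * q ^ (((j + 1) ^ 2 + (j + 1) - 2) / 2) ≤ N)
    (hNM : N * (q ^ (c + 1) - q ^ c) ≤ t * (q ^ k - q ^ c) * M) :
    s ^ (j + 1) * q ^ ((j ^ 2 + j - 2) / 2) ≤ M := by
  have hpos : 0 < s * (q ^ k - q ^ c) :=
    Nat.mul_pos (by omega) (Nat.sub_pos_of_lt (Nat.pow_lt_pow_right hq hck))
  refine Nat.le_of_mul_le_mul_right ?_ hpos
  calc s ^ (j + 1) * q ^ ((j ^ 2 + j - 2) / 2) * (s * (q ^ k - q ^ c))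
      = s ^ (j + 2) * ((q ^ k - q ^ c) * q ^ ((j ^ 2 + j - 2) / 2)) := by ring
    _ ≤ s ^ (j + 2) * (q ^ (((j + 1) ^ 2 + (j + 1) - 2) / 2) * (q ^ (c + 1) - q ^ c)) :=
        Nat.mul_le_mul_left _ (Nat.pow_sub_pow_mul_le hq hck hk)
    _ ≤ N * (q ^ (c + 1) - q ^ c) := by
        rw [← mul_assoc]
        gcongr
    _ ≤ t * (q ^ k - q ^ c) * M := hNM
    _ ≤ M * (s * (q ^ k - q ^ c)) := by
        rw [mul_comm M]
        gcongr

namespace Submodule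

variable {K E ι : Type*} [Field K] [AddCommGroup E] [Module K E]

section FiniteDimensional

variable [FiniteDimensional K E]

lemma exists_pairwise_inf_eq_or_exists_lt_inf {C : Submodule K E} {V : ι → Submodule K E}
    {I : Finset ι} {k s : ℕ} (hC : ∀ i ∈ I, C ≤ V i) (hdim : ∀ i ∈ I, finrank K (V i) = k)
    (hsI : s ≤ #I) :
    (∃ J ⊆ I, #J = s ∧ (J : Set ι).Pairwise fun a b => V a ⊓ V b = C) ∨
      finrank K C < k ∧ ∃ J ⊆ I, #J < s ∧ ∀ i ∈ I, ∃ j ∈ J, C < V i ⊓ V j := by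
  classical
  obtain ⟨J, hJ, hmax⟩ := (I.powerset.filter fun J : Finset ι =>
    (J : Set ι).Pairwise fun a b => V a ⊓ V b = C).exists_max_image card ⟨∅, by simp⟩
  simp only [mem_filter, mem_powerset, and_imp] at hJ hmax
  obtain ⟨hJI, hJC⟩ := hJ
  rcases le_or_gt s #J with hsJ | hJs
  · obtain ⟨J', hJ'J, hJ's⟩ := exists_subset_card_eq hsJ
    exact .inl ⟨J', hJ'J.trans hJI, hJ's, hJC.mono (coe_subset.mpr hJ'J)⟩
  -- If some `V i` were `C`, all would be, and `I` itself would be a larger pairwise family.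
  have hCV : ∀ i ∈ I, C < V i := by
    intro i hi
    refine (hC i hi).lt_of_ne fun hCi => ?_
    have hall : ∀ a ∈ I, V a = C := fun a ha =>
      (eq_of_le_of_finrank_le (hC a ha) (by rw [hdim a ha, hCi, hdim i hi])).symm
    have := hmax I subset_rfl fun a ha b hb _ =>
      show V a ⊓ V b = C by rw [hall a ha, hall b hb, inf_idem]
    omega
  have hcover : ∀ i ∈ I, ∃ j ∈ J, C < V i ⊓ V j := by
    intro i hi
    by_cases hiJ : i ∈ J
    · exact ⟨i, hiJ, by rw [inf_idem]; exact hCV i hi⟩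
    by_contra! hno
    have hins : ((insert i J : Finset ι) : Set ι).Pairwise fun a b => V a ⊓ V b = C := by
      rw [coe_insert, Set.pairwise_insert]
      refine ⟨hJC, fun j hj _ => ?_⟩
      have hij : V i ⊓ V j = C :=
        ((le_inf (hC i hi) (hC j (hJI hj))).lt_or_eq.resolve_left (hno j hj)).symm
      exact ⟨hij, inf_comm (V j) (V i) ▸ hij⟩
    have := hmax _ (insert_subset hi hJI) hins
    rw [card_insert_of_notMem hiJ] at this
    omega
  obtain ⟨i, hi⟩ : I.Nonempty := card_pos.mp (by omega)
  refine .inr ⟨?_, J, hJI, hJs, hcover⟩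
  rw [← hdim i hi]
  exact finrank_lt_finrank_of_lt (hCV i hi)

end FiniteDimensional

variable [Fintype K] [Fintype E]

open scoped Classical in
lemma card_filter_mem (W : Submodule K E) :
    #{x | x ∈ W} = Fintype.card K ^ finrank K W := by
  rw [← Fintype.card_subtype, ← Module.card_eq_pow_finrank (K := K)]

open scoped Classical in
lemma card_filter_mem_and_notMem {C W : Submodule K E} (h : C ≤ W) :
    #{x | x ∈ W ∧ x ∉ C} = Fintype.card K ^ finrank K W - Fintype.card K ^ finrank K C := by
  have hCW : ({x | x ∈ C} : Finset E) ⊆ ({x | x ∈ W} : Finset E) :=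
    monotone_filter_right _ fun _ _ => @h _
  rw [← card_filter_mem, ← card_filter_mem, ← card_sdiff_of_subset hCW, ← filter_and_not]

open scoped Classical in
lemma exists_notMem_card_mul_le_card_filter_mem {C : Submodule K E} {V : ι → Submodule K E}
    {I J : Finset ι} {k : ℕ} (hCJ : ∀ j ∈ J, C ≤ V j) (hdimJ : ∀ j ∈ J, finrank K (V j) ≤ k)
    (hcover : ∀ i ∈ I, ∃ j ∈ J, C < V i ⊓ V j) (hI : I.Nonempty) :
    ∃ x ∉ C, #I * (Fintype.card K ^ (finrank K C + 1) - Fintype.card K ^ finrank K C) ≤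
      #J * (Fintype.card K ^ k - Fintype.card K ^ finrank K C) * #{i ∈ I | x ∈ V i} := by
  set q := Fintype.card K
  set c := finrank K C
  have hq : 1 < q := Fintype.one_lt_card
  set X := J.biUnion fun j => ({x | x ∈ V j ∧ x ∉ C} : Finset E)
  have hX : #X ≤ #J * (q ^ k - q ^ c) := by
    refine card_biUnion_le.trans (sum_le_card_nsmul _ _ _ fun j hj => ?_)
    rw [card_filter_mem_and_notMem (hCJ j hj)]
    exact Nat.sub_le_sub_right (Nat.pow_le_pow_right hq.le (hdimJ j hj)) _
  have hXV : ∀ i ∈ I, q ^ (c + 1) - q ^ c ≤ #{x ∈ X | x ∈ V i} := by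
    intro i hi
    obtain ⟨j, hj, hlt⟩ := hcover i hi
    calc q ^ (c + 1) - q ^ c
        ≤ q ^ finrank K ↥(V i ⊓ V j) - q ^ c :=
          Nat.sub_le_sub_right (Nat.pow_le_pow_right hq.le (finrank_lt_finrank_of_lt hlt)) _
      _ = #{x | x ∈ V i ⊓ V j ∧ x ∉ C} := (card_filter_mem_and_notMem hlt.le).symm
      _ ≤ #{x ∈ X | x ∈ V i} := by
          refine card_le_card fun x hx => ?_
          simp only [mem_filter, mem_univ, true_and, mem_inf] at hx
          simp only [X, mem_filter, mem_biUnion, mem_univ, true_and]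
          exact ⟨⟨j, hj, hx.1.2, hx.2⟩, hx.1.1⟩
  have hsum : #I * (q ^ (c + 1) - q ^ c) ≤ ∑ x ∈ X, #{i ∈ I | x ∈ V i} := by
    calc #I * (q ^ (c + 1) - q ^ c) ≤ ∑ i ∈ I, #{x ∈ X | x ∈ V i} := by
          rw [← smul_eq_mul]
          exact card_nsmul_le_sum _ _ _ hXV
      _ = _ := sum_card_bipartiteAbove_eq_sum_card_bipartiteBelow _
  obtain ⟨i, hi⟩ := hI
  have hXne : X.Nonempty := by
    have : 0 < q ^ (c + 1) - q ^ c := Nat.sub_pos_of_lt (Nat.pow_lt_pow_right hq c.lt_succ_self)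
    exact (card_pos.mp (this.trans_le (hXV i hi))).mono (filter_subset _ _)
  obtain ⟨x, hxX, hx⟩ := exists_le_of_sum_le hXne
    (f := fun _ => #I * (q ^ (c + 1) - q ^ c)) (g := fun x => #X * #{i ∈ I | x ∈ V i})
    (by rw [sum_const, smul_eq_mul, ← mul_sum]; exact Nat.mul_le_mul_left _ hsum)
  have hxC : x ∉ C := by
    obtain ⟨j, -, hx⟩ := mem_biUnion.mp hxX
    exact (mem_filter.mp hx).2.2
  exact ⟨x, hxC, hx.trans (Nat.mul_le_mul_right _ hX)⟩

lemma exists_pairwise_inf_eq_of_le_card {C : Submodule K E} {V : ι → Submodule K E} {k s : ℕ}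
    (j : ℕ) (I : Finset ι) (hC : ∀ i ∈ I, C ≤ V i) (hdim : ∀ i ∈ I, finrank K (V i) = k)
    (hj : k ≤ finrank K C + j)
    (hI : s ^ (j + 1) * Fintype.card K ^ ((j ^ 2 + j - 2) / 2) ≤ #I) :
    ∃ J ⊆ I, #J = s ∧ ∃ D, (J : Set ι).Pairwise fun a b => V a ⊓ V b = D := by
  classical
  have hq : 2 ≤ Fintype.card K := Fintype.one_lt_card
  have hs : ∀ j, s ≤ s ^ (j + 1) * Fintype.card K ^ ((j ^ 2 + j - 2) / 2) := fun j =>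
    (Nat.le_self_pow j.succ_ne_zero s).trans (Nat.le_mul_of_pos_right _ (by positivity))
  induction j generalizing C I with
  | zero =>
    rcases exists_pairwise_inf_eq_or_exists_lt_inf hC hdim ((hs 0).trans hI) with
      ⟨J, hJI, hJs, hJ⟩ | ⟨hCk, -⟩
    · exact ⟨J, hJI, hJs, C, hJ⟩
    · omega
  | succ j ih =>
    rcases exists_pairwise_inf_eq_or_exists_lt_inf hC hdim ((hs (j + 1)).trans hI) with
      ⟨J, hJI, hJs, hJ⟩ | ⟨hCk, J, hJI, hJs, hcover⟩
    · exact ⟨J, hJI, hJs, C, hJ⟩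
    obtain ⟨x, hxC, hx⟩ := exists_notMem_card_mul_le_card_filter_mem
      (fun j hj => hC j (hJI hj)) (fun j hj => (hdim j (hJI hj)).le) hcover
      (card_pos.mp (hJs.trans_le ((hs (j + 1)).trans hI)).pos)
    have hCx : C < C ⊔ span K {x} := left_lt_sup.mpr (by rwa [span_singleton_le_iff_mem])
    have hdimCx := finrank_lt_finrank_of_lt hCx
    obtain ⟨J', hJ'I, hJ's, hJ'⟩ := ih {i ∈ I | x ∈ V i}
      (fun i hi => sup_le (hC i (mem_filter.mp hi).1)
        ((span_singleton_le_iff_mem _ _).mpr (mem_filter.mp hi).2))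
      (fun i hi => hdim i (mem_filter.mp hi).1) (by omega)
      (Nat.pow_mul_pow_le_of_mul_le hq hCk (by omega) hJs hI hx)
    exact ⟨J', hJ'I.trans (filter_subset _ _), hJ's, hJ'⟩

end Submodule

theorem sunflower_lemma_subspaces_general (p : ℕ) (hp : p.Prime) (m k s : ℕ)
    (S : Multiset (Submodule (ZMod p) (Fin m → ZMod p)))
    (hdim : ∀ V ∈ S, Module.finrank (ZMod p) V = k)
    (hcard : s ^ (k + 1) * p ^ ((k ^ 2 + k - 2) / 2) ≤ Multiset.card S) :
    ∃ V : Fin s → Submodule (ZMod p) (Fin m → ZMod p),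
      (↑(List.ofFn V) : Multiset (Submodule (ZMod p) (Fin m → ZMod p))) ≤ S ∧
      ∀ i j, i ≠ j → V i ⊓ V j = ⨅ l, V l := by
  have := Fact.mk hp
  set l := S.toList
  obtain ⟨J, -, hJs, D, hJ⟩ := Submodule.exists_pairwise_inf_eq_of_le_card (C := ⊥) (V := l.get)
    k univ (fun _ _ => bot_le) (fun i _ => hdim _ (Multiset.mem_toList.mp (l.get_mem i)))
    (by simp) (by simpa [ZMod.card, l] using hcard)
  let e := (Finset.equivFinOfCardEq hJs).symm
  have he : Function.Injective fun a => (e a : Fin l.length) :=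
    Subtype.val_injective.comp e.injective
  refine ⟨l.get ∘ fun a => e a, ?_, fun a b hab => ?_⟩
  · calc (↑(List.ofFn (l.get ∘ fun a => e a)) : Multiset _)
        ≤ univ.val.map l.get := Multiset.coe_ofFn_comp_le_map _ he fun _ => mem_univ _
      _ = S := by rw [Fin.univ_val_map, List.ofFn_get, Multiset.coe_toList]
  · exact (hJ.on_injective he fun a => (e a).2).inf_eq_iInf hab

/-- sunflower lemma for subspaces. -/
theorem sunflower_lemma_subspaces (p : ℕ) (hp : p.Prime) (m k s : ℕ)
    (hk : 1 ≤ k) (hmk : k < m) (hs : 1 ≤ s)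
    (S : Multiset (Submodule (ZMod p) (Fin m → ZMod p)))
    (hdim : ∀ V ∈ S, Module.finrank (ZMod p) V = k)
    (hcard : s ^ (k + 1) * p ^ ((k ^ 2 + k - 2) / 2) ≤ Multiset.card S) :
    ∃ V : Fin s → Submodule (ZMod p) (Fin m → ZMod p),
      (↑(List.ofFn V) : Multiset (Submodule (ZMod p) (Fin m → ZMod p))) ≤ S ∧
      ∀ i j, i ≠ j → V i ⊓ V j = ⨅ l, V l :=
  sunflower_lemma_subspaces_general p hp m k s S hdim hcard
end

section
/- For every positive integers d and K and every growth function f : ℕ → ℕ, there exists K' (depending only on d, K and f) such that the following holds: for every m and every factor F = (P₁,…,P_K) of functions 𝔽₂^m → 𝔽₂ each of degree at most d, there exist an integer L ≤ K' and a factor G = (Q₁,…,Q_L) of functions 𝔽₂^m → 𝔽₂ each of degree at most d such that G refines F and G is f(L)-regular. -/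
open Finset

/-- The (exact) degree of `P`: the least `d` such that `P` has degree at most `d`. -/
noncomputable def fdeg {m : ℕ} (P : (Fin m → ZMod 2) → ZMod 2) : ℕ :=
  sInf {d | DegLE d P}

/-- The factor `Q` refines the factor `P`. -/
def TupleRefines {m K L : ℕ} (Q : Fin L → (Fin m → ZMod 2) → ZMod 2)
    (P : Fin K → (Fin m → ZMod 2) → ZMod 2) : Prop :=
  ∃ Γ : (Fin L → ZMod 2) → (Fin K → ZMod 2),
    ∀ x, (fun i => P i x) = Γ (fun j => Q j x)

/-- The factor `P` is `r`-regular: every nonzero linear combination, of degree `ℓ`,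
has `rank_{ℓ-1}` greater than `r`. -/
def TupleRegular {m K : ℕ} (r : ℕ) (P : Fin K → (Fin m → ZMod 2) → ZMod 2) : Prop :=
  ∀ lam : Fin K → ZMod 2, lam ≠ 0 →
    ¬ RankLE (((Finset.univ.filter fun i => lam i = 1).sup fun i => fdeg (P i)) - 1) r
        (fun x => ∑ i, lam i * P i x)

/-- A growth function: nondecreasing and at least the identity. -/
def GrowthFn (f : ℕ → ℕ) : Prop := Monotone f ∧ ∀ r, r ≤ f r


/-!
If a factor is not regular, some combination `∑ λᵢ Qᵢ` has rank at most `r` with respect to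
polynomials of degree below that of its top-degree member `Q i₀`. Solving for `Q i₀` and
replacing it by those at most `r` polynomials refines the factor and lowers its degree profile
(the number of members of each degree) in the colexicographic order, which is well founded.
One step from a profile with `N` members leads to at most `N + f N` members, hence to finitely
many profiles, so well-founded induction gives a size bound that depends only on the profile;
and `K` polynomials of degree at most `d` have finitely many profiles.
-/

theorem DegLE.mono {m d d' : ℕ} {P : (Fin m → ZMod 2) → ZMod 2} (hP : DegLE d P)
    (h : d ≤ d') : DegLE d' P :=
  let ⟨p, hp, he⟩ := hP
  ⟨p, hp.trans h, he⟩

theorem fdeg_le {m d : ℕ} {P : (Fin m → ZMod 2) → ZMod 2} (hP : DegLE d P) : fdeg P ≤ d :=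
  Nat.sInf_le hP

theorem DegLE.exists_eq_const {m : ℕ} {P : (Fin m → ZMod 2) → ZMod 2} (hP : DegLE 0 P) :
    ∃ c, ∀ x, P x = c := by
  obtain ⟨p, hp, he⟩ := hP
  obtain ⟨a, rfl⟩ : ∃ a, p = MvPolynomial.C a :=
    ⟨_, MvPolynomial.totalDegree_eq_zero_iff_eq_C.1 (Nat.le_zero.1 hp)⟩
  exact ⟨a, fun x => by rw [← he x, MvPolynomial.eval_C]⟩

theorem exists_forall_mem_of_monotone {α β : Type*} [SemilatticeSup β] [OrderBot β]
    {P : α → β → Prop} (hP : ∀ a, Monotone (P a)) (s : Finset α) (h : ∀ a ∈ s, ∃ b, P a b) :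
    ∃ b, ∀ a ∈ s, P a b := by
  choose! b hb using h
  exact ⟨s.sup b, fun a ha => hP a (le_sup ha) (hb a ha)⟩

section Factor

variable {m : ℕ} {ι κ τ : Type*}

/-! `TupleRefines` and `TupleRegular` for factors indexed by an arbitrary finite type, so that a
member can be replaced by new ones without renumbering. -/

def Refines (Q : ι → (Fin m → ZMod 2) → ZMod 2) (P : κ → (Fin m → ZMod 2) → ZMod 2) : Prop :=
  ∃ Γ : (ι → ZMod 2) → (κ → ZMod 2), ∀ x, (fun i => P i x) = Γ (fun j => Q j x)

def Regular [Fintype ι] (r : ℕ) (P : ι → (Fin m → ZMod 2) → ZMod 2) : Prop :=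
  ∀ lam : ι → ZMod 2, lam ≠ 0 →
    ¬ RankLE (((univ.filter fun i => lam i = 1).sup fun i => fdeg (P i)) - 1) r
        (fun x => ∑ i, lam i * P i x)

theorem Refines.trans {R : τ → (Fin m → ZMod 2) → ZMod 2} {Q : κ → (Fin m → ZMod 2) → ZMod 2}
    {P : ι → (Fin m → ZMod 2) → ZMod 2} (h₁ : Refines R Q) (h₂ : Refines Q P) :
    Refines R P := by
  obtain ⟨Γ₁, h₁⟩ := h₁
  obtain ⟨Γ₂, h₂⟩ := h₂
  exact ⟨Γ₂ ∘ Γ₁, fun x => by rw [h₂ x, Function.comp_apply, h₁ x]⟩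

theorem refines_comp_equiv (e : κ ≃ ι) (Q : ι → (Fin m → ZMod 2) → ZMod 2) :
    Refines (Q ∘ e) Q :=
  ⟨fun v i => v (e.symm i), fun x => by funext i; simp⟩

theorem Regular.comp_equiv [Fintype ι] [Fintype κ] {r : ℕ} {Q : ι → (Fin m → ZMod 2) → ZMod 2}
    (h : Regular r Q) (e : κ ≃ ι) : Regular r (Q ∘ e) := by
  intro lam hlam
  have hsupp : (univ.filter fun i => lam (e.symm i) = 1) =
      (univ.filter fun k => lam k = 1).map e.toEmbedding := by
    ext i
    simp
  have hsum : ∀ x, ∑ i, lam (e.symm i) * Q i x = ∑ k, lam k * (Q ∘ e) k x := fun x =>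
    Fintype.sum_equiv e.symm _ _ fun i => by simp
  have := h (lam ∘ e.symm) fun h0 => hlam (funext fun k => by simpa using congrFun h0 (e k))
  simp only [Function.comp_apply, hsupp, sup_map, hsum] at this
  exact this

end Factor

section Step

variable {m : ℕ} {ι κ : Type*}

theorem refines_sumElim_of_sum_eq [Fintype ι] [DecidableEq ι]
    {Q : ι → (Fin m → ZMod 2) → ZMod 2} {lam : ι → ZMod 2} {i₀ : ι} (hi₀ : lam i₀ = 1)
    {R : κ → (Fin m → ZMod 2) → ZMod 2} {Γ : (κ → ZMod 2) → ZMod 2}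
    (hΓ : ∀ x, ∑ i, lam i * Q i x = Γ (fun j => R j x)) :
    Refines (Sum.elim (fun i : {i // i ≠ i₀} => Q i) R) Q := by
  refine ⟨fun v i => if h : i = i₀ then
      Γ (fun j => v (Sum.inr j)) - ∑ i' : {i // i ≠ i₀}, lam i' * v (Sum.inl i')
    else v (Sum.inl ⟨i, h⟩), fun x => funext fun i => ?_⟩
  by_cases h : i = i₀
  · subst h
    simp only [dif_pos, Sum.elim_inl, Sum.elim_inr]
    rw [eq_sub_iff_add_eq, ← hΓ x, Fintype.sum_eq_add_sum_subtype_ne _ i, hi₀, one_mul]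
  · simp [h]

theorem exists_refinement_of_not_regular [Fintype ι] [DecidableEq ι] {d r : ℕ}
    {Q : ι → (Fin m → ZMod 2) → ZMod 2} (hQ : ∀ i, DegLE d (Q i)) (hirr : ¬ Regular r Q) :
    ∃ i₀, ∃ r' ≤ r, ∃ R : Fin r' → (Fin m → ZMod 2) → ZMod 2,
      (∀ j, DegLE d (R j)) ∧ (∀ j, fdeg (R j) < fdeg (Q i₀)) ∧
        Refines (Sum.elim (fun i : {i // i ≠ i₀} => Q i) R) Q := by
  simp only [Regular, not_forall, not_not] at hirr
  obtain ⟨lam, hlam, R, Γ, hR, hΓ⟩ := hirr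
  have hne : (univ.filter fun i => lam i = 1).Nonempty := by
    obtain ⟨i, hi⟩ := Function.ne_iff.1 hlam
    have : ∀ u : ZMod 2, u ≠ 0 → u = 1 := by decide
    exact ⟨i, mem_filter.2 ⟨mem_univ i, this _ hi⟩⟩
  obtain ⟨i₀, hi₀, hsup⟩ := exists_mem_eq_sup _ hne fun i => fdeg (Q i)
  rw [hsup] at hR
  have hi₀ : lam i₀ = 1 := (mem_filter.1 hi₀).2
  rcases Nat.eq_zero_or_pos (fdeg (Q i₀)) with h0 | hpos
  · -- a decomposition through constants: the combination itself is constant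
    rw [h0] at hR
    choose c hc using fun j => (hR j).exists_eq_const
    refine ⟨i₀, 0, Nat.zero_le r, Fin.elim0, Fin.rec0, Fin.rec0, ?_⟩
    exact refines_sumElim_of_sum_eq hi₀ (Γ := fun _ => Γ c) fun x =>
      (hΓ x).trans (congrArg Γ (funext fun j => hc j x))
  · have hd := fdeg_le (hQ i₀)
    exact ⟨i₀, r, le_rfl, R, fun j => (hR j).mono (by omega),
      fun j => (fdeg_le (hR j)).trans_lt (by omega), refines_sumElim_of_sum_eq hi₀ hΓ⟩

end Step

section Profile

variable {m : ℕ} {ι κ : Type*} [Fintype ι] [Fintype κ]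

noncomputable def degreeProfile (d : ℕ) (Q : ι → (Fin m → ZMod 2) → ZMod 2) (k : Fin (d + 1)) :
    ℕ :=
  #{i | fdeg (Q i) = k}

theorem degreeProfile_le_card (d : ℕ) (Q : ι → (Fin m → ZMod 2) → ZMod 2) (k : Fin (d + 1)) :
    degreeProfile d Q k ≤ Fintype.card ι :=
  card_filter_le _ _

theorem sum_degreeProfile {d : ℕ} {Q : ι → (Fin m → ZMod 2) → ZMod 2}
    (hQ : ∀ i, fdeg (Q i) ≤ d) : ∑ k, degreeProfile d Q k = Fintype.card ι := by
  rw [← card_univ, card_eq_sum_card_fiberwise (f := fun i => fdeg (Q i)) (t := range (d + 1))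
    fun i _ => mem_range.2 (Nat.lt_succ_of_le (hQ i))]
  exact Fin.sum_univ_eq_sum_range (fun k => #{i | fdeg (Q i) = k}) (d + 1)

theorem degreeProfile_eq_zero {d : ℕ} {Q : ι → (Fin m → ZMod 2) → ZMod 2} {k : Fin (d + 1)}
    (hQ : ∀ i, fdeg (Q i) < k) : degreeProfile d Q k = 0 :=
  card_eq_zero.2 (filter_eq_empty_iff.2 fun i _ => (hQ i).ne)

theorem degreeProfile_sumElim_add [DecidableEq ι] (d : ℕ) (Q : ι → (Fin m → ZMod 2) → ZMod 2)
    (i₀ : ι) (R : κ → (Fin m → ZMod 2) → ZMod 2) (k : Fin (d + 1)) :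
    degreeProfile d (Sum.elim (fun i : {i // i ≠ i₀} => Q i) R) k +
        (if fdeg (Q i₀) = k then 1 else 0) =
      degreeProfile d Q k + degreeProfile d R k := by
  simp only [degreeProfile, card_filter, Fintype.sum_sum_type, Sum.elim_inl, Sum.elim_inr,
    Fintype.sum_eq_add_sum_subtype_ne _ i₀]
  ac_rfl

theorem toColex_degreeProfile_sumElim_lt [DecidableEq ι] {d : ℕ}
    {Q : ι → (Fin m → ZMod 2) → ZMod 2} {i₀ : ι} (hd : fdeg (Q i₀) ≤ d)
    {R : κ → (Fin m → ZMod 2) → ZMod 2} (hR : ∀ j, fdeg (R j) < fdeg (Q i₀)) :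
    toColex (degreeProfile d (Sum.elim (fun i : {i // i ≠ i₀} => Q i) R)) <
      toColex (degreeProfile d Q) := by
  refine ⟨⟨fdeg (Q i₀), Nat.lt_succ_of_le hd⟩, fun k hk => ?_, ?_⟩
  · have h := degreeProfile_sumElim_add d Q i₀ R k
    rw [degreeProfile_eq_zero (Q := R) fun j => (hR j).trans hk,
      if_neg (Fin.val_ne_of_ne hk.ne)] at h
    simpa using h
  · have h := degreeProfile_sumElim_add d Q i₀ R ⟨fdeg (Q i₀), Nat.lt_succ_of_le hd⟩
    rw [degreeProfile_eq_zero (Q := R) hR, if_pos rfl] at h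
    simp only [Pi.toColex_apply]
    omega

end Profile

theorem exists_refinement_toColex_degreeProfile_lt {m d r : ℕ} {ι : Type} [Fintype ι]
    {Q : ι → (Fin m → ZMod 2) → ZMod 2} (hQ : ∀ i, DegLE d (Q i)) (hirr : ¬ Regular r Q) :
    ∃ (ι' : Type) (_ : Fintype ι') (Q' : ι' → (Fin m → ZMod 2) → ZMod 2),
      (∀ i, DegLE d (Q' i)) ∧ Refines Q' Q ∧
        toColex (degreeProfile d Q') < toColex (degreeProfile d Q) ∧
          Fintype.card ι' ≤ Fintype.card ι + r := by
  classical
  obtain ⟨i₀, r', hr', R, hRd, hRlt, hrefines⟩ := exists_refinement_of_not_regular hQ hirr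
  refine ⟨{i // i ≠ i₀} ⊕ Fin r', inferInstance, _, ?_, hrefines,
    toColex_degreeProfile_sumElim_lt (fdeg_le (hQ i₀)) hRlt, ?_⟩
  · rintro (i | j)
    exacts [hQ i, hRd j]
  · rw [Fintype.card_sum, Fintype.card_fin]
    exact add_le_add (Fintype.card_subtype_le _) hr'

def RegularizationBound (d : ℕ) (f : ℕ → ℕ) (c : Fin (d + 1) → ℕ) (B : ℕ) : Prop :=
  ∀ (m : ℕ) (ι : Type) [Fintype ι] (Q : ι → (Fin m → ZMod 2) → ZMod 2),
    (∀ i, DegLE d (Q i)) → degreeProfile d Q = c →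
      ∃ L ≤ B, ∃ Q' : Fin L → (Fin m → ZMod 2) → ZMod 2,
        (∀ j, DegLE d (Q' j)) ∧ Refines Q' Q ∧ Regular (f L) Q'

theorem regularizationBound_monotone (d : ℕ) (f : ℕ → ℕ) (c : Fin (d + 1) → ℕ) :
    Monotone (RegularizationBound d f c) := fun _ _ hB h m ι _ Q hQ hc =>
  let ⟨L, hL, hrest⟩ := h m ι Q hQ hc
  ⟨L, hL.trans hB, hrest⟩

theorem exists_regularizationBound (d : ℕ) (f : ℕ → ℕ) (c : Fin (d + 1) → ℕ) :
    ∃ B, RegularizationBound d f c B := by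
  classical
  induction hc : toColex c using WellFoundedLT.induction generalizing c with
  | ind _ ih =>
    subst hc
    set N := ∑ k, c k
    -- one refinement step from a profile with `N` members leads to at most `N + f N` members
    obtain ⟨B, hB⟩ := exists_forall_mem_of_monotone
      (P := fun c' B => toColex c' < toColex c → RegularizationBound d f c' B)
      (fun c' _ _ hB h hlt => regularizationBound_monotone d f c' hB (h hlt))
      (Fintype.piFinset fun _ => range (N + f N + 1))
      fun c' _ => if hlt : toColex c' < toColex c then (ih _ hlt c' rfl).imp fun _ h _ => h
        else ⟨0, fun h => absurd h hlt⟩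
    refine ⟨max N B, fun m ι _ Q hQ hQc => ?_⟩
    have hcard : Fintype.card ι = N := by
      rw [← sum_degreeProfile fun i => fdeg_le (hQ i), hQc]
    by_cases hreg : Regular (f (Fintype.card ι)) Q
    · exact ⟨Fintype.card ι, hcard ▸ le_max_left N B, Q ∘ (Fintype.equivFin ι).symm,
        fun j => hQ _, refines_comp_equiv _ Q, hreg.comp_equiv _⟩
    obtain ⟨ι', _, Q', hQ', hQ'Q, hlt, hcard'⟩ := exists_refinement_toColex_degreeProfile_lt hQ hreg
    rw [hcard] at hcard'
    have hmem : degreeProfile d Q' ∈ Fintype.piFinset fun _ => range (N + f N + 1) :=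
      Fintype.mem_piFinset.2 fun k => mem_range.2 <| by
        have := degreeProfile_le_card d Q' k
        omega
    obtain ⟨L, hL, Q'', hQ'', hQ''Q', hreg''⟩ := hB _ hmem (hQc ▸ hlt) m ι' Q' hQ' rfl
    exact ⟨L, hL.trans (le_max_right N B), Q'', hQ'', hQ''Q'.trans hQ'Q, hreg''⟩

/-- regularization of factors. -/
theorem regularization :
    ∀ d K : ℕ, 0 < d → 0 < K → ∀ f : ℕ → ℕ, GrowthFn f →
      ∃ K' : ℕ, ∀ m : ℕ, ∀ P : Fin K → (Fin m → ZMod 2) → ZMod 2,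
        (∀ i, DegLE d (P i)) →
        ∃ L ≤ K', ∃ Q : Fin L → (Fin m → ZMod 2) → ZMod 2,
          (∀ j, DegLE d (Q j)) ∧ TupleRefines Q P ∧ TupleRegular (f L) Q := by
  intro d K _ _ f _
  obtain ⟨K', hK'⟩ := exists_forall_mem_of_monotone (regularizationBound_monotone d f)
    (Fintype.piFinset fun _ => range (K + 1)) fun c _ => exists_regularizationBound d f c
  refine ⟨K', fun m P hP => hK' (degreeProfile d P) ?_ m (Fin K) P hP rfl⟩
  exact Fintype.mem_piFinset.2 fun k => mem_range.2 <|
    Nat.lt_succ_of_le ((degreeProfile_le_card d P k).trans (Fintype.card_fin K).le)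
end
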